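/- arXiv:math/0603561 — 4 statements merged into one kernel-verified Lean document; each statement's English description precedes it below -/
import Mathlib

section
/- For n ≥ 1, the minimum of two adjacent uniform spacings satisfies min{S_1^n, S_2^n} equal in distribution to S_1^n / 2. -/
open MeasureTheory

/-- The law of `n` i.i.d. uniform points on `(0,1)`. -/
noncomputable def unif (n : ℕ) : Measure (Fin n → ℝ) :=
  Measure.pi fun _ => volume.restrict (Set.Ioo (0:ℝ) 1)

/-- Order statistics of a tuple of reals. -/
noncomputable def ostat {n : ℕ} (u : Fin n → ℝ) : Fin n → ℝ :=
  u ∘ Tuple.sort u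

/-- The spacings: `spacing u j` is the paper's `S_{j+1}^n`, i.e. `U_{(j+1)} - U_{(j)}`
with boundary conventions `U_{(0)} = 0`, `U_{(n+1)} = 1`. -/
noncomputable def spacing {n : ℕ} (u : Fin n → ℝ) (j : Fin (n+1)) : ℝ :=
  (if h : (j : ℕ) < n then ostat u ⟨j, h⟩ else 1) -
  (if h : 0 < (j : ℕ) then ostat u ⟨(j : ℕ) - 1, by have := j.isLt; omega⟩ else 0)

/-!
For `r ≥ 0`, `min S₁ S₂ > r` says that the smallest point `U_a` lies in `(r, 1 - r)` and every
other point exceeds `U_a + r`. Given `U_a = t`, the other `n - 1` points do so independently, so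
this event has probability `∫_r^{1-r} (1 - r - t)^(n-1) dt = (1 - 2r)^n / n`. Summing over the `n`
choices of `a` gives `(1 - 2r)^n`, the probability that all points exceed `2r`, i.e. `S₁ / 2 > r`.
-/

open Set
open scoped ENNReal

lemma MeasureTheory.Measure.map_eq_map_of_measure_lt {α : Type*} [MeasurableSpace α]
    {μ : Measure α} [IsFiniteMeasure μ] {f g : α → ℝ} (hf : Measurable f) (hg : Measurable g)
    (h : ∀ r, μ {x | r < f x} = μ {x | r < g x}) : μ.map f = μ.map g := by
  refine Measure.ext_of_Iic _ _ fun r => ?_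
  rw [Measure.map_apply hf measurableSet_Iic, Measure.map_apply hg measurableSet_Iic,
    ← compl_Ioi, preimage_compl, preimage_compl, measure_compl (hf measurableSet_Ioi)
    (measure_ne_top _ _), measure_compl (hg measurableSet_Ioi) (measure_ne_top _ _)]
  exact congrArg (μ univ - ·) (h r)

lemma measure_lt_eq_measure_univ_of_neg {α : Type*} [MeasurableSpace α] {μ : Measure α}
    {f : α → ℝ} (hf : 0 ≤ᵐ[μ] f) {r : ℝ} (hr : r < 0) : μ {x | r < f x} = μ univ :=
  measure_congr <| Filter.eventuallyEq_set.2 <| hf.mono fun x hx => by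
    simpa using hr.trans_le hx

lemma lintegral_Ioo_ofReal_sub_pow (a b : ℝ) (m : ℕ) :
    ∫⁻ t in Ioo a b, ENNReal.ofReal (b - t) ^ m =
      ENNReal.ofReal (b - a) ^ (m + 1) / (m + 1) := by
  rcases lt_or_ge b a with hba | hab
  · simp [Ioo_eq_empty_of_le hba.le, ENNReal.ofReal_of_nonpos (sub_nonpos.2 hba.le)]
  have hint : ∫ t in Ioo a b, (b - t) ^ m = (b - a) ^ (m + 1) / (m + 1) := by
    rw [← integral_Ioc_eq_integral_Ioo, ← intervalIntegral.integral_of_le hab,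
      intervalIntegral.integral_comp_sub_left (fun t => t ^ m) b, integral_pow]
    simp
  calc ∫⁻ t in Ioo a b, ENNReal.ofReal (b - t) ^ m
      = ∫⁻ t in Ioo a b, ENNReal.ofReal ((b - t) ^ m) :=
        setLIntegral_congr_fun measurableSet_Ioo fun t ht =>
          (ENNReal.ofReal_pow (sub_nonneg.2 ht.2.le) m).symm
    _ = ENNReal.ofReal (∫ t in Ioo a b, (b - t) ^ m) := by
        refine (ofReal_integral_eq_lintegral_ofReal ?_ ?_).symm
        · exact (continuous_const.sub continuous_id).pow m |>.integrableOn_Icc.mono_set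
            Ioo_subset_Icc_self
        · filter_upwards [ae_restrict_mem measurableSet_Ioo] with t ht
          exact pow_nonneg (sub_nonneg.2 ht.2.le) m
    _ = ENNReal.ofReal (b - a) ^ (m + 1) / (m + 1) := by
        rw [hint, ENNReal.ofReal_div_of_pos (by positivity), ENNReal.ofReal_pow (sub_nonneg.2 hab)]
        norm_cast

lemma volume_restrict_Ioo_Ioi {s : ℝ} (hs : 0 ≤ s) :
    volume.restrict (Ioo (0 : ℝ) 1) (Ioi s) = ENNReal.ofReal (1 - s) := by
  rw [Measure.restrict_apply measurableSet_Ioi, Ioi_inter_Ioo, max_eq_left hs, Real.volume_Ioo]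

section OrderStatistics

variable {n : ℕ}

lemma ostat_mono (u : Fin n → ℝ) : Monotone (ostat u) := Tuple.monotone_sort u

lemma ostat_symm_sort (u : Fin n → ℝ) (i : Fin n) : ostat u ((Tuple.sort u).symm i) = u i := by
  simp [ostat]

lemma ostat_zero_le (u : Fin (n + 1) → ℝ) (i : Fin (n + 1)) : ostat u 0 ≤ u i :=
  ostat_symm_sort u i ▸ ostat_mono u (Fin.zero_le _)

lemma lt_ostat_zero_iff (u : Fin (n + 1) → ℝ) (c : ℝ) : c < ostat u 0 ↔ ∀ i, c < u i :=
  ⟨fun h i => h.trans_le (ostat_zero_le u i), fun h => h _⟩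

lemma ostat_one_le (u : Fin (n + 2) → ℝ) {j : Fin (n + 2)} (hj : j ≠ Tuple.sort u 0) :
    ostat u 1 ≤ u j := by
  rw [← ostat_symm_sort u j]
  refine ostat_mono u (Fin.one_le_of_ne_zero fun h => hj ?_)
  rw [← h, Equiv.apply_symm_apply]

end OrderStatistics

section Measurability

lemma measurableSet_sort_eq {α : Type*} [LinearOrder α] [TopologicalSpace α]
    [OrderClosedTopology α] [SecondCountableTopology α] [MeasurableSpace α]
    [OpensMeasurableSpace α] {n : ℕ} (σ : Equiv.Perm (Fin n)) :
    MeasurableSet {u : Fin n → α | Tuple.sort u = σ} := by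
  have hle : ∀ i j : Fin n, Measurable fun u : Fin n → α => u i ≤ u j := fun i j =>
    measurableSet_setOfPred.1 (measurableSet_le (measurable_pi_apply i) (measurable_pi_apply j))
  have heq : ∀ i j : Fin n, Measurable fun u : Fin n → α => u i = u j := fun i j => by
    simp only [le_antisymm_iff]
    exact (hle i j).and (hle j i)
  simp only [eq_comm (b := σ), Tuple.eq_sort_iff]
  refine measurableSet_setOfPred.2 (Measurable.and ?_ ?_)
  · exact Measurable.forall fun i => Measurable.forall fun j => measurable_const.imp (hle _ _)
  · exact Measurable.forall fun i => Measurable.forall fun j =>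
      measurable_const.imp ((heq _ _).imp measurable_const)

@[fun_prop]
lemma measurable_ostat {n : ℕ} (i : Fin n) : Measurable fun u : Fin n → ℝ => ostat u i := by
  intro s hs
  have : (fun u : Fin n → ℝ => ostat u i) ⁻¹' s =
      ⋃ σ : Equiv.Perm (Fin n), {u | Tuple.sort u = σ} ∩ (fun u => u (σ i)) ⁻¹' s := by
    ext u
    simp [ostat]
  rw [this]
  exact .iUnion fun σ => (measurableSet_sort_eq σ).inter (measurable_pi_apply _ hs)

@[fun_prop]
lemma measurable_spacing {n : ℕ} (j : Fin (n + 1)) :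
    Measurable fun u : Fin n → ℝ => spacing u j := by
  unfold spacing
  split_ifs <;> fun_prop

end Measurability

section Spacings

variable {n : ℕ}

lemma spacing_nonneg (u : Fin n → ℝ) (hu : ∀ i, u i ∈ Icc 0 1) (j : Fin (n + 1)) :
    0 ≤ spacing u j := by
  have hbound : ∀ i, ostat u i ∈ Icc 0 1 := fun i => hu _
  unfold spacing
  split_ifs
  · exact sub_nonneg.2 (ostat_mono u (Fin.mk_le_mk.2 (Nat.sub_le _ _)))
  · exact sub_nonneg.2 (hbound _).1
  · exact sub_nonneg.2 (hbound _).2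
  · norm_num

lemma spacing_zero (u : Fin (n + 1) → ℝ) : spacing u 0 = ostat u 0 := by
  simp [spacing]

-- `S₁ + S₂ = U_{(2)}`, which is the boundary value `1` when `n = 1`.
lemma lt_spacing_zero_add_spacing_one_iff (u : Fin (n + 1) → ℝ) (hu : ∀ i, u i < 1)
    (c : ℝ) :
    c < spacing u 0 + spacing u 1 ↔ c < 1 ∧ ∀ j ≠ Tuple.sort u 0, c < u j := by
  cases n with
  | zero =>
    have hsum : spacing u 0 + spacing u 1 = 1 := by simp [spacing]
    simp [hsum, Fin.eq_zero (Tuple.sort u 0)]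
  | succ n =>
    have hsum : spacing u 0 + spacing u 1 = ostat u 1 := by
      simp [spacing]
    rw [hsum]
    refine ⟨fun h => ⟨h.trans (hu _), fun j hj => h.trans_le (ostat_one_le u hj)⟩,
      fun h => h.2 _ ?_⟩
    exact (Tuple.sort u).injective.ne (by simp)

end Spacings

def isolatedMin {n : ℕ} (r : ℝ) (a : Fin n) : Set (Fin n → ℝ) :=
  {u | u a ∈ Ioo r (1 - r) ∧ ∀ j ≠ a, u a + r < u j}

lemma lt_min_spacing_iff {n : ℕ} (u : Fin (n + 1) → ℝ) (hu : ∀ i, u i < 1) {r : ℝ}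
    (hr : 0 ≤ r) : r < min (spacing u 0) (spacing u 1) ↔ ∃ a, u ∈ isolatedMin r a := by
  have hshift : r < spacing u 1 ↔ ostat u 0 + r < spacing u 0 + spacing u 1 := by
    rw [spacing_zero]
    constructor <;> intro <;> linarith
  have hmin : ostat u 0 = u (Tuple.sort u 0) := rfl
  rw [lt_min_iff, hshift, lt_spacing_zero_add_spacing_one_iff u hu, spacing_zero]
  constructor
  · rintro ⟨h₀, h₁, h₂⟩
    exact ⟨Tuple.sort u 0, ⟨h₀, by linarith⟩, h₂⟩
  · rintro ⟨a, ⟨ha₀, ha₁⟩, ha⟩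
    obtain rfl : Tuple.sort u 0 = a := by
      by_contra hne
      linarith [ha _ hne, ostat_zero_le u a]
    exact ⟨ha₀, by linarith, ha⟩

lemma measurableSet_isolatedMin {n : ℕ} (r : ℝ) (a : Fin n) :
    MeasurableSet (isolatedMin r a) := by
  unfold isolatedMin
  measurability

lemma unif_isolatedMin {n : ℕ} (a : Fin (n + 1)) {r : ℝ} (hr : 0 ≤ r) :
    unif (n + 1) (isolatedMin r a) = ENNReal.ofReal (1 - 2 * r) ^ (n + 1) / (n + 1) := by
  set ν := volume.restrict (Ioo (0 : ℝ) 1)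
  set B : Set (ℝ × (Fin n → ℝ)) := {p | p.1 ∈ Ioo r (1 - r) ∧ ∀ j, p.1 + r < p.2 j}
  have hB : MeasurableSet B := by
    simp only [B, mem_Ioo, ofPred_and, ofPred_forall]
    measurability
  have hpre : isolatedMin r a = MeasurableEquiv.piFinSuccAbove (fun _ => ℝ) a ⁻¹' B := by
    ext u
    simp only [isolatedMin, B, mem_ofPred_eq, mem_preimage,
      MeasurableEquiv.piFinSuccAbove_apply, Fin.insertNthEquiv_symm_apply]
    refine and_congr_right fun _ => ⟨fun h j => h _ (Fin.succAbove_ne a j), fun h j hj => ?_⟩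
    obtain ⟨k, rfl⟩ := Fin.exists_succAbove_eq hj
    exact h k
  -- Split off coordinate `a`: given `u a = t`, the other coordinates must all exceed `t + r`.
  have hfiber : ∀ t, Measure.pi (fun _ : Fin n => ν) (Prod.mk t ⁻¹' B) =
      (Ioo r (1 - r)).indicator (fun t => ENNReal.ofReal (1 - r - t) ^ n) t := by
    intro t
    by_cases ht : t ∈ Ioo r (1 - r)
    · have : Prod.mk t ⁻¹' B = univ.pi fun _ => Ioi (t + r) := by
        ext w
        simp only [B, mem_preimage, mem_ofPred_eq, ht, true_and, mem_univ_pi, mem_Ioi]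
      rw [indicator_of_mem ht, this, Measure.pi_pi, volume_restrict_Ioo_Ioi (by linarith [ht.1])]
      simp [sub_sub, add_comm]
    · have : Prod.mk t ⁻¹' B = ∅ := by
        ext w
        simp only [B, mem_preimage, mem_ofPred_eq, ht, false_and, mem_empty_iff_false]
      rw [indicator_of_notMem ht, this, measure_empty]
  rw [unif, hpre, (measurePreserving_piFinSuccAbove (fun _ => ν) a).measure_preimage
    hB.nullMeasurableSet, Measure.prod_apply hB]
  simp only [hfiber]
  rw [lintegral_indicator measurableSet_Ioo, Measure.restrict_restrict measurableSet_Ioo,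
    inter_eq_left.2 (Ioo_subset_Ioo hr (by linarith)), lintegral_Ioo_ofReal_sub_pow]
  congr 3
  ring

instance isFiniteMeasure_unif (n : ℕ) : IsFiniteMeasure (unif n) := by
  unfold unif
  infer_instance

lemma ae_unif_mem_Ioo (n : ℕ) : ∀ᵐ u ∂unif n, ∀ i, u i ∈ Ioo 0 1 :=
  ae_all_iff.2 fun _ => Measure.tendsto_eval_ae_ae.eventually (ae_restrict_mem measurableSet_Ioo)

lemma ae_unif_spacing_nonneg (n : ℕ) : ∀ᵐ u ∂unif n, ∀ j, 0 ≤ spacing u j :=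
  (ae_unif_mem_Ioo n).mono fun u hu => spacing_nonneg u fun i => Ioo_subset_Icc_self (hu i)

lemma unif_lt_min_spacing {n : ℕ} {r : ℝ} (hr : 0 ≤ r) :
    unif (n + 1) {u | r < min (spacing u 0) (spacing u 1)} =
      ENNReal.ofReal (1 - 2 * r) ^ (n + 1) := by
  have hunion : {u | r < min (spacing u 0) (spacing u 1)} =ᵐ[unif (n + 1)]
      ⋃ a, isolatedMin r a :=
    Filter.eventuallyEq_set.2 <| (ae_unif_mem_Ioo _).mono fun u hu => by
      simpa using lt_min_spacing_iff u (fun i => (hu i).2) hr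
  have hdisj : Pairwise (Function.onFun Disjoint (isolatedMin (n := n + 1) r)) :=
    fun a b hab => disjoint_left.2 fun u ha hb => by
      linarith [ha.2 b (Ne.symm hab), hb.2 a hab]
  rw [measure_congr hunion, measure_iUnion hdisj (measurableSet_isolatedMin r), tsum_fintype]
  simp only [unif_isolatedMin _ hr, Finset.sum_const, Finset.card_univ, Fintype.card_fin,
    nsmul_eq_mul, Nat.cast_add_one]
  exact ENNReal.mul_div_cancel (by positivity) (by simp)

lemma unif_lt_half_spacing_zero {n : ℕ} {r : ℝ} (hr : 0 ≤ r) :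
    unif (n + 1) {u | r < spacing u 0 / 2} = ENNReal.ofReal (1 - 2 * r) ^ (n + 1) := by
  have : {u : Fin (n + 1) → ℝ | r < spacing u 0 / 2} = univ.pi fun _ => Ioi (2 * r) := by
    ext u
    simp [spacing_zero, lt_div_iff₀, mul_comm r, lt_ostat_zero_iff]
  rw [this, unif, Measure.pi_pi, volume_restrict_Ioo_Ioi (by positivity)]
  simp

/-- The minimum of two uniform spacings is equal in distribution to half of a single
spacing. -/
theorem min_two_spacings_eq_half_spacing (n : ℕ) (hn : 1 ≤ n) :
    Measure.map (fun u => min (spacing u 0) (spacing u 1)) (unif n)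
      = Measure.map (fun u => spacing u 0 / 2) (unif n) := by
  obtain ⟨m, rfl⟩ := Nat.exists_eq_add_of_le' hn
  refine Measure.map_eq_map_of_measure_lt (by fun_prop) (by fun_prop) fun r => ?_
  rcases lt_or_ge r 0 with hr | hr
  · have hspacing := ae_unif_spacing_nonneg (m + 1)
    have hmin : 0 ≤ᵐ[unif (m + 1)] fun u => min (spacing u 0) (spacing u 1) :=
      hspacing.mono fun u hu => le_min (hu 0) (hu 1)
    have hhalf : 0 ≤ᵐ[unif (m + 1)] fun u => spacing u 0 / 2 :=
      hspacing.mono fun u hu => div_nonneg (hu 0) zero_le_two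
    rw [measure_lt_eq_measure_univ_of_neg hmin hr, measure_lt_eq_measure_univ_of_neg hhalf hr]
  · rw [unif_lt_min_spacing hr, unif_lt_half_spacing_zero hr]
end

section
/- For α = 1, the expected total length of the on-line nearest-neighbour graph on the point sequence (0, 1, U_1, ..., U_n), where U_i are i.i.d. uniform on (0,1), equals 1 + Σ_{i=1}^n 1/(2(i+1)), and hence equals (1/2)log n + (1/2)(γ+1) + O(1/n) as n → ∞, where γ is Euler's constant. -/
open MeasureTheory

/-- Total `α`-power-weighted length of the on-line nearest-neighbour graph on the
sequence of points `x 0, x 1, …`: each point after the first is joined to its nearest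
neighbour among the points preceding it in the sequence. -/

noncomputable def ongWeight (α : ℝ) {m : ℕ} (x : Fin m → ℝ) : ℝ :=
  ∑ i : Fin m, if 0 < (i : ℕ) then
      (sInf {d : ℝ | ∃ j : Fin m, (j : ℕ) < (i : ℕ) ∧ d = |x i - x j|}) ^ α
    else 0

/-!
Adding the points one at a time, the total length grows by the distance from the new point
`U_{k+1}` to the nearest of `0, 1, U_1, …, U_k`, so the expectation is `1` plus the sum of these
expected distances. Given `U_{k+1} = v`, that distance exceeds `t < min v (1 - v)` exactly when
none of the `k` earlier uniform points lies within `t` of `v`, an event of probability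
`(1 - 2t)^k`; integrating over `t` and then over `v` gives `1 / (2 (k + 2))`. The expected length
is therefore `(H_{n+1} + 1) / 2`, and `H_n = log n + γ + O(1/n)`.
-/

open Set Filter Asymptotics

noncomputable def nearestDist {m : ℕ} (x : Fin (m + 1) → ℝ) (y : ℝ) : ℝ :=
  Finset.univ.inf' Finset.univ_nonempty fun j => |y - x j|

theorem nearestDist_nonneg {m : ℕ} (x : Fin (m + 1) → ℝ) (y : ℝ) : 0 ≤ nearestDist x y :=
  Finset.le_inf' _ _ fun _ _ => abs_nonneg _

theorem nearestDist_le {m : ℕ} (x : Fin (m + 1) → ℝ) (y : ℝ) (j : Fin (m + 1)) :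
    nearestDist x y ≤ |y - x j| :=
  Finset.inf'_le _ (Finset.mem_univ j)

theorem ongWeight_snoc (α : ℝ) {m : ℕ} (x : Fin (m + 1) → ℝ) (y : ℝ) :
    ongWeight α (Fin.snoc x y : Fin (m + 2) → ℝ) = ongWeight α x + nearestDist x y ^ α := by
  rw [ongWeight, Fin.sum_univ_castSucc, ongWeight, if_pos (by simp), nearestDist,
    Finset.inf'_eq_csInf_image, Finset.coe_univ, image_univ]
  congr 1
  · refine Finset.sum_congr rfl fun i _ => ?_
    have hi : ¬ m + 1 < (i : ℕ) := by omega
    simp [Fin.exists_fin_succ', hi]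
  · congr 2
    ext d
    simp [Fin.exists_fin_succ', eq_comm]

theorem ongWeight_fin_one (α : ℝ) (x : Fin 1 → ℝ) : ongWeight α x = 0 := by
  simp [ongWeight]

theorem ongWeight_zero_one (α : ℝ) (u : Fin 0 → ℝ) :
    ongWeight α (Fin.cons 0 (Fin.cons 1 u) : Fin 2 → ℝ) = 1 := by
  have : (Fin.cons 0 (Fin.cons 1 u) : Fin 2 → ℝ) = Fin.snoc (fun _ : Fin 1 => 0) 1 := by
    ext i; fin_cases i <;> rfl
  rw [this, ongWeight_snoc, ongWeight_fin_one]
  simp [nearestDist]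

theorem ongWeight_cons_zero_one_eq_init (α : ℝ) {n : ℕ} (u : Fin (n + 1) → ℝ) :
    ongWeight α (Fin.cons 0 (Fin.cons 1 u) : Fin (n + 3) → ℝ)
      = ongWeight α (Fin.cons 0 (Fin.cons 1 (Fin.init u)) : Fin (n + 2) → ℝ)
        + nearestDist (Fin.cons 0 (Fin.cons 1 (Fin.init u))) (u (Fin.last n)) ^ α := by
  conv_lhs => rw [← Fin.snoc_init_self u]
  rw [Fin.cons_snoc_eq_snoc_cons, Fin.cons_snoc_eq_snoc_cons, ongWeight_snoc]

theorem continuous_nearestDist (m : ℕ) :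
    Continuous fun p : (Fin (m + 1) → ℝ) × ℝ => nearestDist p.1 p.2 :=
  Continuous.finset_inf'_apply _ fun j _ =>
    (continuous_snd.sub ((continuous_apply j).comp continuous_fst)).abs

theorem continuous_ongWeight {α : ℝ} (hα : 0 ≤ α) (m : ℕ) :
    Continuous (ongWeight α : (Fin (m + 1) → ℝ) → ℝ) := by
  induction m with
  | zero => simpa [funext (ongWeight_fin_one α)] using continuous_const
  | succ m ih =>
    have h : (ongWeight α : (Fin (m + 2) → ℝ) → ℝ) = fun x =>
        ongWeight α (Fin.init x) + nearestDist (Fin.init x) (x (Fin.last _)) ^ α := by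
      ext x; rw [← ongWeight_snoc, Fin.snoc_init_self]
    have hinit : Continuous (Fin.init : (Fin (m + 2) → ℝ) → Fin (m + 1) → ℝ) :=
      continuous_id.finInit
    rw [h]
    exact (ih.comp hinit).add (((continuous_nearestDist m).comp
      (hinit.prodMk (continuous_apply _))).rpow_const fun _ => Or.inr hα)

instance : IsProbabilityMeasure (volume.restrict (Ioo (0:ℝ) 1)) :=
  ⟨by simp⟩

instance (n : ℕ) : IsProbabilityMeasure (unif n) := by
  unfold unif; infer_instance

theorem Continuous.integrable_unif {n : ℕ} {f : (Fin n → ℝ) → ℝ} (hf : Continuous f) :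
    Integrable f (unif n) := by
  rw [unif, ← Measure.restrict_pi_pi]
  exact (hf.continuousOn.integrableOn_compact (isCompact_univ_pi fun _ => isCompact_Icc)).mono_set
    (pi_mono fun _ _ => Ioo_subset_Icc_self)

theorem integral_unif_succ {n : ℕ} {g : (Fin (n + 1) → ℝ) → ℝ}
    (hg : Integrable g (unif (n + 1))) :
    ∫ u, g u ∂unif (n + 1) = ∫ v in Ioo 0 1, ∫ w, g (Fin.snoc w v) ∂unif n := by
  have hmp := measurePreserving_piFinSuccAbove
    (fun _ : Fin (n + 1) => volume.restrict (Ioo (0:ℝ) 1)) (Fin.last n)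
  have hsymm : ∀ p : ℝ × (Fin n → ℝ),
      (MeasurableEquiv.piFinSuccAbove (fun _ => ℝ) (Fin.last n)).symm p = Fin.snoc p.2 p.1 :=
    fun p => Fin.insertNth_last' p.1 p.2
  rw [unif, ← hmp.symm.integral_comp', ← unif]
  simp only [hsymm]
  refine integral_prod (fun p : ℝ × (Fin n → ℝ) => g (Fin.snoc p.2 p.1)) ?_
  have hint := (hmp.symm.integrable_comp_emb (MeasurableEquiv.measurableEmbedding _)).2 hg
  simp only [Function.comp_def, hsymm] at hint
  exact hint

theorem measureReal_restrict_Ioo_lt_abs_sub {t v : ℝ} (ht : 0 ≤ t) (htv : t < v)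
    (htv' : t < 1 - v) :
    (volume.restrict (Ioo (0:ℝ) 1)).real {u | t < |v - u|} = 1 - 2 * t := by
  have hball : Metric.closedBall v t ⊆ Ioo 0 1 := by
    rw [Real.closedBall_eq_Icc]
    exact Icc_subset_Ioo (by linarith) (by linarith)
  have hcompl : {u | t < |v - u|} = (Metric.closedBall v t)ᶜ := by
    ext u
    rw [mem_ofPred_eq, mem_compl_iff, Metric.mem_closedBall, Real.dist_eq, abs_sub_comm, not_le]
  rw [hcompl, probReal_compl_eq_one_sub Metric.isClosed_closedBall.measurableSet,
    measureReal_restrict_apply Metric.isClosed_closedBall.measurableSet,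
    inter_eq_left.2 hball, Real.volume_real_closedBall ht]

theorem integral_unif_forall_lt_abs_sub (k : ℕ) {t v : ℝ} (ht : 0 ≤ t) (htv : t < v)
    (htv' : t < 1 - v) :
    ∫ w, (if ∀ i, t < |v - w i| then 1 else 0 : ℝ) ∂unif k = (1 - 2 * t) ^ k := by
  have hS : MeasurableSet {u : ℝ | t < |v - u|} :=
    measurableSet_lt measurable_const (measurable_const.sub measurable_id).abs
  have hind : (fun w : Fin k → ℝ => if ∀ i, t < |v - w i| then (1 : ℝ) else 0)
      = (univ.pi fun _ => {u | t < |v - u|}).indicator 1 := by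
    ext w
    by_cases h : ∀ i, t < |v - w i| <;> simp [h]
  rw [hind, integral_indicator_one (MeasurableSet.univ_pi fun _ => hS), unif, measureReal_def,
    Measure.pi_pi, ENNReal.toReal_prod]
  simp only [Finset.prod_const, Finset.card_univ, Fintype.card_fin, ← measureReal_def,
    measureReal_restrict_Ioo_lt_abs_sub ht htv htv']

theorem integral_Ioo_ite_lt {a d : ℝ} (hd : 0 ≤ d) (hda : d ≤ a) :
    ∫ t in Ioo 0 a, (if t < d then 1 else 0 : ℝ) = d := by
  have hind : (fun t : ℝ => if t < d then (1 : ℝ) else 0) = (Iio d).indicator 1 := by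
    ext t
    simp [indicator_apply]
  rw [hind, integral_indicator_one measurableSet_Iio, measureReal_restrict_apply measurableSet_Iio]
  have : Iio d ∩ Ioo 0 a = Ioo 0 d := by
    ext t
    simp only [mem_inter_iff, mem_Iio, mem_Ioo]
    constructor
    · rintro ⟨h1, h2, _⟩; exact ⟨h2, h1⟩
    · rintro ⟨h1, h2⟩; exact ⟨h2, h1, h2.trans_le hda⟩
  rw [this, Real.volume_real_Ioo_of_le hd, sub_zero]

theorem lt_nearestDist_cons_zero_one_iff {k : ℕ} (w : Fin k → ℝ) {t v : ℝ} (htv : t < v)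
    (htv' : t < 1 - v) :
    t < nearestDist (Fin.cons 0 (Fin.cons 1 w)) v ↔ ∀ i, t < |v - w i| := by
  have h0 : t < |v| := htv.trans_le (le_abs_self v)
  have h1 : t < |v - 1| := by rw [abs_sub_comm]; exact htv'.trans_le (le_abs_self _)
  simp [nearestDist, Finset.lt_inf'_iff, Fin.forall_fin_succ, h0, h1]

theorem nearestDist_cons_zero_one_le_min {k : ℕ} (w : Fin k → ℝ) {v : ℝ}
    (hv : v ∈ Ioo (0:ℝ) 1) :
    nearestDist (Fin.cons 0 (Fin.cons 1 w)) v ≤ min v (1 - v) := by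
  refine le_min ?_ ?_
  · simpa [abs_of_pos hv.1] using nearestDist_le (Fin.cons 0 (Fin.cons 1 w)) v 0
  · have h := nearestDist_le (Fin.cons 0 (Fin.cons 1 w)) v 1
    simp only [Fin.cons_one, Fin.cons_zero] at h
    rwa [abs_sub_comm, abs_of_pos (sub_pos.2 hv.2)] at h

theorem nearestDist_cons_zero_one_eq_integral {k : ℕ} (w : Fin k → ℝ) {v : ℝ}
    (hv : v ∈ Ioo (0:ℝ) 1) :
    nearestDist (Fin.cons 0 (Fin.cons 1 w)) v
      = ∫ t in Ioo 0 (min v (1 - v)), if ∀ i, t < |v - w i| then 1 else 0 := by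
  rw [← integral_Ioo_ite_lt (nearestDist_nonneg _ _)
    (nearestDist_cons_zero_one_le_min w hv)]
  refine setIntegral_congr_fun measurableSet_Ioo fun t ht => ?_
  exact if_congr (lt_nearestDist_cons_zero_one_iff w (ht.2.trans_le (min_le_left _ _))
    (ht.2.trans_le (min_le_right _ _))) rfl rfl

theorem integral_one_sub_two_mul_pow (n : ℕ) (a : ℝ) :
    ∫ t in (0:ℝ)..a, (1 - 2 * t) ^ n = (1 - (1 - 2 * a) ^ (n + 1)) / (2 * (n + 1)) := by
  rw [intervalIntegral.integral_comp_sub_mul (fun x => x ^ n) two_ne_zero, integral_pow]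
  norm_num
  field_simp

theorem integral_one_sub_two_mul_min_pow (n : ℕ) :
    ∫ v in (0:ℝ)..1, (1 - 2 * min v (1 - v)) ^ n = 1 / (n + 1) := by
  have hc : Continuous fun v : ℝ => (1 - 2 * min v (1 - v)) ^ n := by fun_prop
  rw [← intervalIntegral.integral_add_adjacent_intervals (b := 1 / 2)
    (hc.intervalIntegrable _ _) (hc.intervalIntegrable _ _)]
  have hleft : ∫ v in (0:ℝ)..1 / 2, (1 - 2 * min v (1 - v)) ^ n
      = ∫ v in (0:ℝ)..1 / 2, (1 - 2 * v) ^ n := by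
    refine intervalIntegral.integral_congr fun v hv => ?_
    rw [uIcc_of_le (by norm_num)] at hv
    rw [min_eq_left (by linarith [hv.2])]
  have hright : ∫ v in (1 / 2 : ℝ)..1, (1 - 2 * min v (1 - v)) ^ n
      = ∫ v in (1 / 2 : ℝ)..1, (2 * v - 1) ^ n := by
    refine intervalIntegral.integral_congr fun v hv => ?_
    rw [uIcc_of_le (by norm_num)] at hv
    rw [min_eq_right (by linarith [hv.1])]
    ring
  rw [hleft, hright, intervalIntegral.integral_comp_sub_mul (fun x => x ^ n) two_ne_zero,
    intervalIntegral.integral_comp_mul_sub (fun x => x ^ n) two_ne_zero, integral_pow, integral_pow]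
  norm_num
  field_simp
  ring

theorem integral_unif_nearestDist_cons_zero_one (k : ℕ) {v : ℝ} (hv : v ∈ Ioo (0:ℝ) 1) :
    ∫ w, nearestDist (Fin.cons 0 (Fin.cons 1 w)) v ∂unif k
      = ∫ t in (0:ℝ)..min v (1 - v), (1 - 2 * t) ^ k := by
  have hmin : 0 ≤ min v (1 - v) := le_min hv.1.le (sub_nonneg.2 hv.2.le)
  have hmeas : MeasurableSet {p : (Fin k → ℝ) × ℝ | ∀ i, p.2 < |v - p.1 i|} := by
    simp only [ofPred_forall]
    exact MeasurableSet.iInter fun i => measurableSet_lt measurable_snd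
      (measurable_const.sub ((measurable_pi_apply i).comp measurable_fst)).abs
  have hint : Integrable (Function.uncurry fun (w : Fin k → ℝ) (t : ℝ) =>
      if ∀ i, t < |v - w i| then (1 : ℝ) else 0)
      ((unif k).prod (volume.restrict (Ioo 0 (min v (1 - v))))) := by
    have : IsFiniteMeasure (volume.restrict (Ioo (0:ℝ) (min v (1 - v)))) :=
      isFiniteMeasure_restrict.2 measure_Ioo_lt_top.ne
    refine Integrable.of_bound ((measurable_const.ite hmeas measurable_const).aestronglyMeasurable)
      1 (ae_of_all _ fun p => ?_)
    simp only [Function.uncurry]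
    split_ifs <;> simp
  rw [integral_congr_ae (ae_of_all _ fun w => nearestDist_cons_zero_one_eq_integral w hv),
    integral_integral_swap hint, intervalIntegral.integral_of_le hmin,
    integral_Ioc_eq_integral_Ioo]
  refine setIntegral_congr_fun measurableSet_Ioo fun t ht => ?_
  exact integral_unif_forall_lt_abs_sub k ht.1.le (ht.2.trans_le (min_le_left _ _))
    (ht.2.trans_le (min_le_right _ _))

theorem integral_integral_unif_nearestDist_cons_zero_one (k : ℕ) :
    ∫ v in Ioo 0 1, ∫ w, nearestDist (Fin.cons 0 (Fin.cons 1 w)) v ∂unif k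
      = 1 / (2 * (k + 2)) := by
  have hc : Continuous fun v : ℝ => (1 - 2 * min v (1 - v)) ^ (k + 1) := by fun_prop
  rw [setIntegral_congr_fun measurableSet_Ioo fun v hv => by
      rw [integral_unif_nearestDist_cons_zero_one k hv, integral_one_sub_two_mul_pow],
    ← integral_Ioc_eq_integral_Ioo, ← intervalIntegral.integral_of_le zero_le_one,
    intervalIntegral.integral_div,
    intervalIntegral.integral_sub intervalIntegrable_const (hc.intervalIntegrable _ _),
    integral_one_sub_two_mul_min_pow, intervalIntegral.integral_const, sub_zero, smul_eq_mul,
    mul_one]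
  push_cast
  field_simp
  ring

theorem integral_unif_ongWeight_cons_zero_one (n : ℕ) :
    ∫ u, ongWeight 1 (Fin.cons 0 (Fin.cons 1 u) : Fin (n + 2) → ℝ) ∂unif n
      = 1 + ∑ i ∈ Finset.Icc 1 n, 1 / (2 * ((i : ℝ) + 1)) := by
  induction n with
  | zero => simp [ongWeight_zero_one]
  | succ n ih =>
    have hcons : Continuous fun u : Fin (n + 1) → ℝ =>
        (Fin.cons 0 (Fin.cons 1 (Fin.init u)) : Fin (n + 2) → ℝ) :=
      continuous_const.finCons (continuous_const.finCons continuous_id.finInit)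
    have hold : Continuous fun u : Fin (n + 1) → ℝ =>
        ongWeight 1 (Fin.cons 0 (Fin.cons 1 (Fin.init u)) : Fin (n + 2) → ℝ) :=
      (continuous_ongWeight zero_le_one (n + 1)).comp hcons
    have hnew : Continuous fun u : Fin (n + 1) → ℝ =>
        nearestDist (Fin.cons 0 (Fin.cons 1 (Fin.init u))) (u (Fin.last n)) :=
      (continuous_nearestDist (n + 1)).comp (hcons.prodMk (continuous_apply _))
    simp only [ongWeight_cons_zero_one_eq_init, Real.rpow_one]
    rw [integral_add hold.integrable_unif hnew.integrable_unif,
      integral_unif_succ hold.integrable_unif, integral_unif_succ hnew.integrable_unif]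
    simp only [Fin.init_snoc, Fin.snoc_last]
    rw [integral_const, ih, integral_integral_unif_nearestDist_cons_zero_one,
      Finset.sum_Icc_succ_top (by omega)]
    simp
    ring

theorem harmonic_sub_log_sub_eulerMascheroniConstant_isBigO :
    (fun n : ℕ => (harmonic n : ℝ) - Real.log n - Real.eulerMascheroniConstant)
      =O[atTop] fun n => 1 / (n : ℝ) := by
  refine IsBigO.of_bound 1 (eventually_atTop.2 ⟨1, fun n hn => ?_⟩)
  have hn0 : (0 : ℝ) < n := by exact_mod_cast hn
  have hlower := Real.eulerMascheroniConstant_lt_eulerMascheroniSeq' n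
  have hupper := Real.eulerMascheroniSeq_lt_eulerMascheroniConstant n
  rw [Real.eulerMascheroniSeq', if_neg (by omega)] at hlower
  rw [Real.eulerMascheroniSeq] at hupper
  have hlog : Real.log (n + 1) - Real.log n ≤ 1 / n := by
    rw [← Real.log_div (by positivity) hn0.ne']
    calc Real.log ((n + 1) / n) ≤ (n + 1) / n - 1 := Real.log_le_sub_one_of_pos (by positivity)
      _ = 1 / n := by field_simp; ring
  rw [Real.norm_eq_abs, Real.norm_eq_abs, abs_of_pos (by linarith), abs_of_pos (by positivity)]
  linarith

theorem sum_Icc_one_div_two_mul_add_one (n : ℕ) :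
    ∑ i ∈ Finset.Icc 1 n, 1 / (2 * ((i : ℝ) + 1)) = ((harmonic (n + 1) : ℝ) - 1) / 2 := by
  induction n with
  | zero => simp
  | succ n ih =>
    rw [Finset.sum_Icc_succ_top (by omega), ih, harmonic_succ (n + 1)]
    push_cast
    field_simp
    ring

/-- Expected total length (`α = 1`) of the ONG on `(0, 1, U₁, …, U_n)`:
it equals `1 + Σ_{i=1}^n 1/(2(i+1))`, and hence equals
`(1/2) log n + (1/2)(γ+1) + O(1/n)` as `n → ∞`, where `γ` is Euler's constant. -/
theorem ong_expected_length_alpha_one :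
    (∀ n : ℕ, 1 ≤ n →
      ∫ u, ongWeight 1 (Fin.cons 0 (Fin.cons 1 u)) ∂(unif n)
        = 1 + ∑ i ∈ Finset.Icc 1 n, 1 / (2*((i:ℝ)+1)))
    ∧ (fun n : ℕ =>
        (∫ u, ongWeight 1 (Fin.cons 0 (Fin.cons 1 u)) ∂(unif n))
          - ((1/2) * Real.log n
              + (1/2) * (Real.eulerMascheroniConstant + 1)))
        =O[Filter.atTop] fun n : ℕ => 1 / (n:ℝ) := by
  refine ⟨fun n _ => integral_unif_ongWeight_cons_zero_one n, ?_⟩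
  have hdecomp : ∀ n : ℕ, (∫ u, ongWeight 1 (Fin.cons 0 (Fin.cons 1 u)) ∂(unif n))
      - ((1/2) * Real.log n + (1/2) * (Real.eulerMascheroniConstant + 1))
      = 1 / 2 * (((harmonic n : ℝ) - Real.log n - Real.eulerMascheroniConstant)
        + 1 / ((n : ℝ) + 1)) := fun n => by
    rw [integral_unif_ongWeight_cons_zero_one, sum_Icc_one_div_two_mul_add_one, harmonic_succ]
    push_cast
    ring
  have hlast : (fun n : ℕ => 1 / ((n : ℝ) + 1)) =O[atTop] fun n => 1 / (n : ℝ) := by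
    refine Asymptotics.IsBigO.of_bound 1 (eventually_atTop.2 ⟨1, fun n hn => ?_⟩)
    have hn1 : (1 : ℝ) ≤ n := by exact_mod_cast hn
    rw [Real.norm_eq_abs, Real.norm_eq_abs, abs_of_pos (by positivity), abs_of_pos (by positivity),
      one_mul]
    gcongr
    linarith
  simp only [hdecomp]
  exact (harmonic_sub_log_sub_eulerMascheroniConstant_isBigO.add hlast).const_mul_left _
end

section
/- For n ≥ 2 and α > 0, the expected total α-power-weighted length of the nearest-neighbour directed graph on n i.i.d. uniform points in (0,1) equals ((n-2)·2^{-α} + 2)·Γ(n+1)Γ(α+1)/Γ(n+α+1), which is asymptotic to 2^{-α}Γ(α+1)n^{1-α} as n → ∞. -/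
open MeasureTheory Asymptotics

/-- Total `α`-power-weighted length of the nearest-neighbour (directed) graph on the
points `x 0, …, x (m-1)`: each point is joined by a directed edge to its nearest
neighbour among the other points. -/
noncomputable def nnWeight (α : ℝ) {m : ℕ} (x : Fin m → ℝ) : ℝ :=
  ∑ i : Fin m, (sInf {d : ℝ | ∃ j : Fin m, j ≠ i ∧ d = |x i - x j|}) ^ α

open Set Filter Topology

/-!
Each point contributes the `α`-th power of its nearest-neighbour distance, and by
exchangeability all `n` contributions have the same mean. Conditionally on the position `t` of
one point, the other `n - 1` points avoid the `s`-neighbourhood of `t` independently, so its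
nearest-neighbour distance `d` satisfies
`P(d ≥ s) = ∫₀¹ ((t - s)₊ + (1 - t - s)₊)^(n-1) dt = ((n - 2)(1 - 2s)₊ⁿ + 2(1 - s)₊ⁿ) / n`.
The layer-cake formula `E dᵅ = α ∫₀^∞ s^(α-1) P(d ≥ s) ds` turns this into the Beta integrals
`B(α, n + 1)` and `2^(-α) B(α, n + 1)`, and the asymptotics follow from Euler's limit formula,
which gives `Γ(n + 1) / Γ(n + α + 1) ~ n^(-α)`.
-/

noncomputable def nnDist {ι : Type*} (x : ι → ℝ) (i : ι) : ℝ :=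
  sInf {d : ℝ | ∃ j, j ≠ i ∧ d = |x i - x j|}

section NearestNeighbour

variable {ι : Type*} (x : ι → ℝ) (i : ι)

lemma nnWeight_eq_sum_nnDist (α : ℝ) {m : ℕ} (x : Fin m → ℝ) :
    nnWeight α x = ∑ i, nnDist x i ^ α := rfl

lemma nnDist_nonneg : 0 ≤ nnDist x i :=
  Real.sInf_nonneg (by rintro _ ⟨j, -, rfl⟩; exact abs_nonneg _)

lemma nnDist_le_abs_sub {j : ι} (hj : j ≠ i) : nnDist x i ≤ |x i - x j| :=
  csInf_le ⟨0, by rintro _ ⟨k, -, rfl⟩; exact abs_nonneg _⟩ ⟨j, hj, rfl⟩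

lemma nnDist_comp_perm (σ : Equiv.Perm ι) : nnDist (x ∘ σ) i = nnDist x (σ i) := by
  unfold nnDist
  congr 1
  ext d
  simp only [Function.comp_apply, Set.mem_ofPred_eq]
  exact ⟨fun ⟨j, hj, hd⟩ => ⟨σ j, σ.injective.ne hj, hd⟩,
    fun ⟨j, hj, hd⟩ => ⟨σ.symm j, by rwa [Ne, Equiv.symm_apply_eq], by simpa using hd⟩⟩

variable [Fintype ι] [DecidableEq ι]

lemma nnDist_eq_inf' (h : (Finset.univ.erase i).Nonempty) :
    nnDist x i = (Finset.univ.erase i).inf' h fun j => |x i - x j| := by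
  rw [nnDist, Finset.inf'_eq_csInf_image]
  congr 1
  ext d
  simp [eq_comm]

lemma le_nnDist_iff (h : (Finset.univ.erase i).Nonempty) {s : ℝ} :
    s ≤ nnDist x i ↔ ∀ j ≠ i, s ≤ |x i - x j| := by
  simp [nnDist_eq_inf' x i h, Finset.le_inf'_iff]

@[fun_prop]
lemma measurable_nnDist : Measurable fun x : ι → ℝ => nnDist x i := by
  by_cases h : (Finset.univ.erase i).Nonempty
  · have hinf : Measurable ((Finset.univ.erase i).inf' h fun j (x : ι → ℝ) => |x i - x j|) :=
      Finset.inf'_induction h _ (fun _ hf _ hg => hf.inf hg) fun j _ => by fun_prop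
    convert hinf using 1
    ext x
    rw [nnDist_eq_inf' x i h, Finset.inf'_apply]
  · have : ∀ j : ι, j = i := fun j => (by simpa using h : Subsingleton ι).elim j i
    simp [nnDist, this]

end NearestNeighbour

section IID

variable (μ : Measure ℝ) [SigmaFinite μ] {ι : Type*} [Fintype ι] [DecidableEq ι]

lemma integral_comp_nnDist_eq (f : ℝ → ℝ) (i k : ι) :
    ∫ x, f (nnDist x i) ∂Measure.pi (fun _ => μ)
      = ∫ x, f (nnDist x k) ∂Measure.pi (fun _ => μ) := by
  let e := MeasurableEquiv.arrowCongr' (Equiv.swap k i) (MeasurableEquiv.refl ℝ)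
  have hex : ∀ x, e x = x ∘ Equiv.swap k i := fun x => rfl
  have he : MeasurePreserving e (Measure.pi fun _ => μ) (Measure.pi fun _ => μ) :=
    measurePreserving_arrowCongr' _ _ _ _ fun _ => MeasurePreserving.id _
  have hswap : ∀ x, nnDist (e x) k = nnDist x i := fun x => by
    simpa [hex] using nnDist_comp_perm x k (Equiv.swap k i)
  simp_rw [← hswap]
  exact he.integral_comp' (fun y => f (nnDist y k))

lemma integral_sum_comp_nnDist (f : ℝ → ℝ)
    (hf : ∀ i, Integrable (fun x => f (nnDist x i)) (Measure.pi fun _ : ι => μ)) (k : ι) :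
    ∫ x : ι → ℝ, ∑ i, f (nnDist x i) ∂Measure.pi (fun _ => μ)
      = Fintype.card ι * ∫ x, f (nnDist x k) ∂Measure.pi (fun _ : ι => μ) := by
  rw [integral_finsetSum _ fun i _ => hf i,
    Finset.sum_congr rfl fun i _ => integral_comp_nnDist_eq μ f i k, Finset.sum_const,
    Finset.card_univ, nsmul_eq_mul]

lemma pi_le_nnDist_zero {m : ℕ} (hm : m ≠ 0) (s : ℝ) :
    Measure.pi (fun _ : Fin (m + 1) => μ) {x | s ≤ nnDist x 0}
      = ∫⁻ t, μ {u | s ≤ |t - u|} ^ m ∂μ := by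
  set B : Set (ℝ × (Fin m → ℝ)) := {p | ∀ k, s ≤ |p.1 - p.2 k|}
  have hB : MeasurableSet B := by
    simp only [B, Set.ofPred_forall]
    exact MeasurableSet.iInter fun k => measurableSet_le measurable_const (by fun_prop)
  have hne : (Finset.univ.erase (0 : Fin (m + 1))).Nonempty := by
    rw [← Finset.card_pos, Finset.card_erase_of_mem (Finset.mem_univ _)]
    simpa [Nat.pos_iff_ne_zero] using hm
  have hpre : {x : Fin (m + 1) → ℝ | s ≤ nnDist x 0}
      = MeasurableEquiv.piFinSuccAbove (fun _ => ℝ) 0 ⁻¹' B := by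
    ext x
    simp [B, le_nnDist_iff x 0 hne, Fin.forall_fin_succ, Fin.tail]
  rw [hpre, (measurePreserving_piFinSuccAbove (fun _ => μ) 0).measure_preimage
    hB.nullMeasurableSet, Measure.prod_apply hB]
  congr with t
  have hslice : Prod.mk t ⁻¹' B = Set.univ.pi fun _ => {u | s ≤ |t - u|} := by
    ext
    simp [B]
  simp [hslice, Measure.pi_pi]

end IID

lemma integrableOn_Ioi_rpow_mul {p : ℝ} (hp : 0 < p) {G : ℝ → ℝ} (hG_cont : Continuous G)
    {M : ℝ} (hGM : ∀ t > M, G t = 0) : IntegrableOn (fun t => t ^ (p - 1) * G t) (Ioi 0) := by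
  have hIoc : IntegrableOn (fun t => t ^ (p - 1) * G t) (Ioc 0 M) :=
    ((intervalIntegral.intervalIntegrable_rpow' (by linarith)).mul_continuousOn
      hG_cont.continuousOn).1
  have hIoi : IntegrableOn (fun t => t ^ (p - 1) * G t) (Ioi M) :=
    integrableOn_zero.congr_fun (fun t ht => by simp [hGM t ht]) measurableSet_Ioi
  exact (hIoc.union hIoi).mono_set fun t ht => (le_or_gt t M).imp (fun h => ⟨ht, h⟩) id

lemma integral_rpow_eq_integral_tail {Ω : Type*} [MeasurableSpace Ω] {μ : Measure Ω}
    {f : Ω → ℝ} (hf : AEMeasurable f μ) (hf_nn : 0 ≤ᵐ[μ] f) {p : ℝ} (hp : 0 < p) {G : ℝ → ℝ}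
    (hG : ∀ t > 0, μ {ω | t ≤ f ω} = ENNReal.ofReal (G t)) (hG_nn : ∀ t > 0, 0 ≤ G t)
    (hG_cont : Continuous G) {M : ℝ} (hGM : ∀ t > M, G t = 0) :
    ∫ ω, f ω ^ p ∂μ = p * ∫ t in Ioi 0, t ^ (p - 1) * G t := by
  have hint := integrableOn_Ioi_rpow_mul hp hG_cont hGM
  have hnn : ∀ t ∈ Ioi (0:ℝ), 0 ≤ t ^ (p - 1) * G t := fun t ht =>
    mul_nonneg (Real.rpow_nonneg (le_of_lt ht) _) (hG_nn t ht)
  have hlayer : ∫⁻ ω, ENNReal.ofReal (f ω ^ p) ∂μ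
      = ENNReal.ofReal p * ENNReal.ofReal (∫ t in Ioi 0, t ^ (p - 1) * G t) := by
    rw [lintegral_rpow_eq_lintegral_meas_le_mul μ hf_nn hf hp,
      ofReal_integral_eq_lintegral_ofReal hint (ae_restrict_of_forall_mem measurableSet_Ioi hnn)]
    congr 1
    refine setLIntegral_congr_fun measurableSet_Ioi fun t ht => ?_
    rw [hG t ht, ENNReal.ofReal_mul (Real.rpow_nonneg (le_of_lt ht) _), mul_comm]
  rw [integral_eq_lintegral_of_nonneg_ae (hf_nn.mono fun ω h => Real.rpow_nonneg h p)
      (hf.pow_const p).aestronglyMeasurable, hlayer, ENNReal.toReal_mul,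
    ENNReal.toReal_ofReal hp.le, ENNReal.toReal_ofReal (setIntegral_nonneg measurableSet_Ioi hnn)]

lemma setIntegral_Ioo_rpow_mul_one_sub_rpow {α β : ℝ} (hα : 0 < α) (hβ : 0 < β) :
    ∫ x in Ioo (0:ℝ) 1, x ^ (α - 1) * (1 - x) ^ (β - 1) = ProbabilityTheory.beta α β := by
  have h := ProbabilityTheory.lintegral_betaPDF_eq_one hα hβ
  have hB := ProbabilityTheory.beta_pos hα hβ
  rw [ProbabilityTheory.lintegral_betaPDF, ← ENNReal.toReal_eq_one_iff,
    ← integral_eq_lintegral_of_nonneg_ae _ (by fun_prop)] at h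
  · simp_rw [mul_assoc, integral_const_mul] at h
    field_simp at h
    exact h
  · exact ae_restrict_of_forall_mem measurableSet_Ioo fun x hx =>
      mul_nonneg (mul_nonneg (by positivity) (Real.rpow_nonneg hx.1.le _))
        (Real.rpow_nonneg (sub_nonneg.2 hx.2.le) _)

lemma integral_Ioi_rpow_mul_max_one_sub_pow {α : ℝ} (hα : 0 < α) {n : ℕ} (hn : n ≠ 0) {c : ℝ}
    (hc : 0 < c) :
    ∫ s in Ioi 0, s ^ (α - 1) * max (1 - c * s) 0 ^ n
      = c ^ (-α) * ProbabilityTheory.beta α (n + 1) := by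
  have hbase : ∫ s in Ioi 0, s ^ (α - 1) * max (1 - s) 0 ^ n
      = ProbabilityTheory.beta α (n + 1) := by
    rw [← setIntegral_Ioo_rpow_mul_one_sub_rpow hα (by positivity),
      setIntegral_eq_of_subset_of_forall_sdiff_eq_zero measurableSet_Ioi Ioo_subset_Ioi_self
        fun s hs => ?_]
    · refine setIntegral_congr_fun measurableSet_Ioo fun s hs => ?_
      rw [max_eq_left (by linarith [hs.2]), add_sub_cancel_right, Real.rpow_natCast]
    · have h1 : 1 ≤ s := not_lt.1 fun h => hs.2 ⟨hs.1, h⟩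
      rw [max_eq_right (by linarith), zero_pow hn, mul_zero]
  calc ∫ s in Ioi 0, s ^ (α - 1) * max (1 - c * s) 0 ^ n
      = ∫ s in Ioi 0, c ^ (1 - α) * ((c * s) ^ (α - 1) * max (1 - c * s) 0 ^ n) := by
        refine setIntegral_congr_fun measurableSet_Ioi fun s hs => ?_
        rw [Real.mul_rpow hc.le (le_of_lt hs), ← mul_assoc, ← mul_assoc, ← Real.rpow_add hc]
        simp
    _ = c ^ (1 - α) * c⁻¹ * ∫ u in Ioi 0, u ^ (α - 1) * max (1 - u) 0 ^ n := by
        rw [integral_const_mul,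
          integral_comp_mul_left_Ioi (fun u => u ^ (α - 1) * max (1 - u) 0 ^ n) 0 hc, mul_zero,
          smul_eq_mul, mul_assoc]
    _ = c ^ (-α) * ProbabilityTheory.beta α (n + 1) := by
        rw [hbase, ← Real.rpow_neg_one, ← Real.rpow_add hc]
        ring_nf

section Uniform

instance inst_s15 : IsProbabilityMeasure (volume.restrict (Ioo (0:ℝ) 1)) :=
  ⟨by simp [Real.volume_Ioo]⟩

instance inst_s15_2 (n : ℕ) : IsProbabilityMeasure (unif n) := by
  unfold unif
  infer_instance

lemma unif_ae_mem (n : ℕ) : ∀ᵐ x ∂unif n, ∀ i, x i ∈ Ioo (0:ℝ) 1 :=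
  ae_all_iff.2 fun i =>
    (Measure.tendsto_eval_ae_ae (i := i)).eventually (ae_restrict_mem measurableSet_Ioo)

lemma nnDist_le_one {ι : Type*} {x : ι → ℝ} (hx : ∀ j, x j ∈ Icc (0:ℝ) 1) (i : ι) :
    nnDist x i ≤ 1 := by
  by_cases h : ∃ j, j ≠ i
  · obtain ⟨j, hj⟩ := h
    refine (nnDist_le_abs_sub x i hj).trans (abs_sub_le_iff.2 ⟨?_, ?_⟩) <;>
      linarith [(hx i).1, (hx i).2, (hx j).1, (hx j).2]
  · push Not at h
    simp [nnDist, h]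

lemma integrable_nnDist_rpow_unif {α : ℝ} (hα : 0 ≤ α) {n : ℕ} (i : Fin n) :
    Integrable (fun x => nnDist x i ^ α) (unif n) := by
  refine Integrable.of_bound (by fun_prop) 1 ?_
  filter_upwards [unif_ae_mem n] with x hx
  have hle := nnDist_le_one (fun j => Ioo_subset_Icc_self (hx j)) i
  rw [Real.norm_of_nonneg (Real.rpow_nonneg (nnDist_nonneg x i) α)]
  exact Real.rpow_le_one (nnDist_nonneg x i) hle hα

lemma volume_restrict_Ioo_le_abs_sub {s t : ℝ} (hs : 0 < s) (ht : t ∈ Ioo (0:ℝ) 1) :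
    volume.restrict (Ioo (0:ℝ) 1) {u | s ≤ |t - u|}
      = ENNReal.ofReal (max (t - s) 0 + max (1 - t - s) 0) := by
  have hmeas : MeasurableSet {u : ℝ | s ≤ |t - u|} :=
    measurableSet_le measurable_const (by fun_prop)
  have hset : {u : ℝ | s ≤ |t - u|} ∩ Ioo 0 1 = Ioc 0 (t - s) ∪ Ico (t + s) 1 := by
    ext u
    simp only [mem_inter_iff, mem_ofPred_eq, mem_Ioo, mem_union, mem_Ioc, mem_Ico, le_abs']
    constructor
    · rintro ⟨h | h, h0, h1⟩
      · exact Or.inr ⟨by linarith, h1⟩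
      · exact Or.inl ⟨h0, by linarith⟩
    · rintro (⟨h0, h⟩ | ⟨h, h1⟩)
      · exact ⟨Or.inr (by linarith), h0, by linarith [ht.2]⟩
      · exact ⟨Or.inl (by linarith), by linarith [ht.1], h1⟩
  have hdisj : Disjoint (Ioc 0 (t - s)) (Ico (t + s) 1) :=
    disjoint_left.2 fun u h1 h2 => by linarith [h1.2, h2.1]
  rw [Measure.restrict_apply hmeas, hset, measure_union hdisj measurableSet_Ico, Real.volume_Ioc,
    Real.volume_Ico, ENNReal.ofReal_add (le_max_right _ _) (le_max_right _ _)]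
  simp [sub_sub]

end Uniform

section UniformTail

variable {m : ℕ}

/-- The probability that a given one of `m + 1` independent uniform points of `(0, 1)` is at
distance at least `s` from all the others (`unif_le_nnDist_zero`). -/
noncomputable def nnTail (m : ℕ) (s : ℝ) : ℝ :=
  ((m - 1) * max (1 - 2 * s) 0 ^ (m + 1) + 2 * max (1 - s) 0 ^ (m + 1)) / (m + 1)

lemma nnTail_nonneg (hm : m ≠ 0) (s : ℝ) : 0 ≤ nnTail m s := by
  have : (0 : ℝ) ≤ m - 1 := sub_nonneg.2 (by exact_mod_cast Nat.one_le_iff_ne_zero.2 hm)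
  unfold nnTail
  positivity

lemma nnTail_eq_zero {s : ℝ} (hs : 1 ≤ s) : nnTail m s = 0 := by
  simp [nnTail, max_eq_right (by linarith : 1 - 2 * s ≤ 0),
    max_eq_right (by linarith : 1 - s ≤ 0)]

lemma continuous_nnTail (m : ℕ) : Continuous (nnTail m) := by
  unfold nnTail
  fun_prop

lemma integral_max_sub_pow (hm : m ≠ 0) {s : ℝ} (hs : 0 ≤ s) :
    ∫ t in (0:ℝ)..1, max (t - s) 0 ^ m = max (1 - s) 0 ^ (m + 1) / (m + 1) := by
  have hcont : Continuous fun t : ℝ => max (t - s) 0 ^ m := by fun_prop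
  rcases le_or_gt 1 s with h1 | h1
  · rw [max_eq_right (by linarith), zero_pow m.succ_ne_zero, zero_div]
    refine (intervalIntegral.integral_congr fun t ht => ?_).trans intervalIntegral.integral_zero
    rw [uIcc_of_le zero_le_one] at ht
    simp [max_eq_right (by linarith [ht.2] : t - s ≤ 0), zero_pow hm]
  · have hleft : ∫ t in (0:ℝ)..s, max (t - s) 0 ^ m = 0 := by
      refine (intervalIntegral.integral_congr fun t ht => ?_).trans intervalIntegral.integral_zero
      rw [uIcc_of_le hs] at ht
      simp [max_eq_right (by linarith [ht.2] : t - s ≤ 0), zero_pow hm]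
    have hright : ∫ t in s..1, max (t - s) 0 ^ m = ∫ t in s..1, (t - s) ^ m := by
      refine intervalIntegral.integral_congr fun t ht => ?_
      rw [uIcc_of_le h1.le] at ht
      simp [max_eq_left (by linarith [ht.1] : 0 ≤ t - s)]
    rw [← intervalIntegral.integral_add_adjacent_intervals (hcont.intervalIntegrable 0 s)
      (hcont.intervalIntegrable s 1), hleft, hright,
      intervalIntegral.integral_comp_sub_right (fun u => u ^ m), integral_pow,
      max_eq_left (by linarith)]
    simp

lemma integral_max_sub_add_max_sub_pow_of_half_le (hm : m ≠ 0) {s : ℝ} (hs : 1 / 2 ≤ s) :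
    ∫ t in (0:ℝ)..1, (max (t - s) 0 + max (1 - t - s) 0) ^ m = nnTail m s := by
  have hdisj : ∀ t : ℝ, (max (t - s) 0 + max (1 - t - s) 0) ^ m
      = max (t - s) 0 ^ m + max ((1 - t) - s) 0 ^ m := by
    intro t
    rcases le_total t s with h | h
    · rw [max_eq_right (by linarith : t - s ≤ 0), zero_add, zero_pow hm, zero_add]
    · rw [max_eq_right (by linarith : 1 - t - s ≤ 0), add_zero, zero_pow hm, add_zero]
  have hcont : Continuous fun t : ℝ => max (t - s) 0 ^ m := by fun_prop
  simp_rw [hdisj]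
  rw [intervalIntegral.integral_add (hcont.intervalIntegrable 0 1)
      ((by fun_prop : Continuous fun t : ℝ => max (1 - t - s) 0 ^ m).intervalIntegrable 0 1),
    intervalIntegral.integral_comp_sub_left (fun u => max (u - s) 0 ^ m), sub_self, sub_zero,
    integral_max_sub_pow hm (by linarith), nnTail, max_eq_right (by linarith : 1 - 2 * s ≤ 0),
    zero_pow m.succ_ne_zero]
  ring

lemma integral_max_sub_add_max_sub_pow_of_lt_half {s : ℝ} (hs0 : 0 ≤ s) (hs : s < 1 / 2) :
    ∫ t in (0:ℝ)..1, (max (t - s) 0 + max (1 - t - s) 0) ^ m = nnTail m s := by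
  have hcont : Continuous fun t : ℝ => (max (t - s) 0 + max (1 - t - s) 0) ^ m := by fun_prop
  have hleft : ∫ t in (0:ℝ)..s, (max (t - s) 0 + max (1 - t - s) 0) ^ m
      = ∫ t in (0:ℝ)..s, (1 - s - t) ^ m := by
    refine intervalIntegral.integral_congr fun t ht => ?_
    rw [uIcc_of_le hs0] at ht
    simp only [max_eq_right (by linarith [ht.2] : t - s ≤ 0),
      max_eq_left (by linarith [ht.2] : 0 ≤ 1 - t - s)]
    ring
  have hmid : ∫ t in s..(1 - s), (max (t - s) 0 + max (1 - t - s) 0) ^ m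
      = ∫ _ in s..(1 - s), (1 - 2 * s) ^ m := by
    refine intervalIntegral.integral_congr fun t ht => ?_
    rw [uIcc_of_le (by linarith)] at ht
    simp only [max_eq_left (by linarith [ht.1] : 0 ≤ t - s),
      max_eq_left (by linarith [ht.2] : 0 ≤ 1 - t - s)]
    ring
  have hright : ∫ t in (1 - s)..1, (max (t - s) 0 + max (1 - t - s) 0) ^ m
      = ∫ t in (1 - s)..1, (t - s) ^ m := by
    refine intervalIntegral.integral_congr fun t ht => ?_
    rw [uIcc_of_le (by linarith)] at ht
    simp only [max_eq_left (by linarith [ht.1] : 0 ≤ t - s),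
      max_eq_right (by linarith [ht.1] : 1 - t - s ≤ 0), add_zero]
  rw [← intervalIntegral.integral_add_adjacent_intervals (hcont.intervalIntegrable 0 s)
      (hcont.intervalIntegrable s 1),
    ← intervalIntegral.integral_add_adjacent_intervals (hcont.intervalIntegrable s (1 - s))
      (hcont.intervalIntegrable (1 - s) 1), hleft, hmid, hright,
    intervalIntegral.integral_comp_sub_left (fun u => u ^ m),
    intervalIntegral.integral_comp_sub_right (fun u => u ^ m), integral_pow, integral_pow,
    intervalIntegral.integral_const, nnTail, max_eq_left (by linarith), max_eq_left (by linarith)]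
  field_simp
  ring

lemma integral_max_sub_add_max_sub_pow (hm : m ≠ 0) {s : ℝ} (hs : 0 ≤ s) :
    ∫ t in (0:ℝ)..1, (max (t - s) 0 + max (1 - t - s) 0) ^ m = nnTail m s := by
  rcases lt_or_ge s (1 / 2) with h | h
  · exact integral_max_sub_add_max_sub_pow_of_lt_half hs h
  · exact integral_max_sub_add_max_sub_pow_of_half_le hm h

end UniformTail

lemma unif_le_nnDist_zero {m : ℕ} (hm : m ≠ 0) {s : ℝ} (hs : 0 < s) :
    unif (m + 1) {x | s ≤ nnDist x 0} = ENNReal.ofReal (nnTail m s) := by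
  have hcont : Continuous fun t : ℝ => (max (t - s) 0 + max (1 - t - s) 0) ^ m := by fun_prop
  rw [unif, pi_le_nnDist_zero _ hm, setLIntegral_congr_fun measurableSet_Ioo fun t ht => by
      rw [volume_restrict_Ioo_le_abs_sub hs ht, ← ENNReal.ofReal_pow (by positivity)],
    ← ofReal_integral_eq_lintegral_ofReal (hcont.integrableOn_Icc.mono_set Ioo_subset_Icc_self)
      (Eventually.of_forall fun t => by positivity),
    ← integral_Ioc_eq_integral_Ioo, ← intervalIntegral.integral_of_le zero_le_one,
    integral_max_sub_add_max_sub_pow hm hs.le]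

lemma integral_nnDist_rpow_unif {α : ℝ} (hα : 0 < α) {m : ℕ} (hm : m ≠ 0) :
    ∫ x, nnDist x 0 ^ α ∂unif (m + 1)
      = ((m - 1) * 2 ^ (-α) + 2) / (m + 1) * α * ProbabilityTheory.beta α (m + 2) := by
  have hint : ∀ c : ℝ, 0 < c → IntegrableOn
      (fun t => t ^ (α - 1) * max (1 - c * t) 0 ^ (m + 1)) (Ioi 0) := fun c hc =>
    integrableOn_Ioi_rpow_mul hα (by fun_prop) (M := c⁻¹) fun t ht => by
      rw [max_eq_right (by nlinarith [mul_inv_cancel₀ hc.ne']), zero_pow m.succ_ne_zero]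
  have hsplit : ∀ t, t ^ (α - 1) * nnTail m t
      = (m - 1) / (m + 1) * (t ^ (α - 1) * max (1 - 2 * t) 0 ^ (m + 1))
        + 2 / (m + 1) * (t ^ (α - 1) * max (1 - 1 * t) 0 ^ (m + 1)) := fun t => by
    rw [nnTail, one_mul]
    ring
  rw [integral_rpow_eq_integral_tail (measurable_nnDist 0).aemeasurable
      (Eventually.of_forall fun x => nnDist_nonneg x 0) hα (fun t ht => unif_le_nnDist_zero hm ht)
      (fun t _ => nnTail_nonneg hm t) (continuous_nnTail m) (M := 1)
      fun t ht => nnTail_eq_zero ht.le,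
    funext hsplit, integral_add ((hint 2 two_pos).const_mul _) ((hint 1 one_pos).const_mul _),
    integral_const_mul, integral_const_mul,
    integral_Ioi_rpow_mul_max_one_sub_pow hα m.succ_ne_zero two_pos,
    integral_Ioi_rpow_mul_max_one_sub_pow hα m.succ_ne_zero one_pos, Real.one_rpow]
  push_cast
  ring_nf

lemma integral_nnWeight_unif {α : ℝ} (hα : 0 < α) {n : ℕ} (hn : 2 ≤ n) :
    ∫ u, nnWeight α u ∂(unif n)
      = (((n:ℝ) - 2) * (2:ℝ)^(-α) + 2) * Real.Gamma ((n:ℝ)+1) * Real.Gamma (α+1)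
          / Real.Gamma ((n:ℝ)+α+1) := by
  obtain ⟨m, rfl⟩ : ∃ m, n = m + 1 := ⟨n - 1, by omega⟩
  have hm : m ≠ 0 := by omega
  have hsum : ∫ u, nnWeight α u ∂(unif (m + 1))
      = (m + 1 : ℕ) * ∫ x, nnDist x 0 ^ α ∂unif (m + 1) := by
    simp_rw [nnWeight_eq_sum_nnDist]
    rw [unif, integral_sum_comp_nnDist _ (· ^ α) (fun i => integrable_nnDist_rpow_unif hα.le i) 0,
      Fintype.card_fin]
  have hΓ : Real.Gamma (α + (m + 2)) ≠ 0 := (Real.Gamma_pos_of_pos (by positivity)).ne'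
  rw [hsum, integral_nnDist_rpow_unif hα hm, ProbabilityTheory.beta, Real.Gamma_add_one hα.ne']
  push_cast
  rw [show (m : ℝ) + 1 + α + 1 = α + (m + 2) by ring, show (m : ℝ) + 1 + 1 = m + 2 by ring]
  field_simp
  ring

lemma prod_range_add_eq_Gamma_div {α : ℝ} (hα : 0 < α) (n : ℕ) :
    ∏ j ∈ Finset.range (n + 1), (α + j) = Real.Gamma (α + n + 1) / Real.Gamma α := by
  have hΓ : Real.Gamma α ≠ 0 := (Real.Gamma_pos_of_pos hα).ne'
  induction n with
  | zero => simp [Real.Gamma_add_one hα.ne', hΓ]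
  | succ n ih =>
    rw [Finset.prod_range_succ, ih, Nat.cast_succ, ← add_assoc,
      Real.Gamma_add_one (by positivity : α + n + 1 ≠ 0)]
    ring

lemma isEquivalent_Gamma_div_Gamma {α : ℝ} (hα : 0 < α) :
    (fun n : ℕ => Real.Gamma ((n:ℝ) + 1) / Real.Gamma ((n:ℝ) + α + 1))
      ~[atTop] fun n => (n:ℝ) ^ (-α) := by
  refine isEquivalent_of_tendsto_one ?_
  have h := (Real.GammaSeq_tendsto_Gamma α).div_const (Real.Gamma α)
  rw [div_self (Real.Gamma_pos_of_pos hα).ne'] at h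
  refine h.congr' ?_
  filter_upwards [eventually_gt_atTop 0] with n hn
  have hn' : (0 : ℝ) < n := by exact_mod_cast hn
  have hΓ : Real.Gamma (α + n + 1) ≠ 0 := (Real.Gamma_pos_of_pos (by positivity)).ne'
  rw [Pi.div_apply, Real.GammaSeq, prod_range_add_eq_Gamma_div hα, ← Real.Gamma_nat_eq_factorial,
    Real.rpow_neg hn'.le, add_comm (n : ℝ) α]
  field_simp

lemma isEquivalent_nnWeight_formula {α : ℝ} (hα : 0 < α) :
    (fun n : ℕ => (((n:ℝ) - 2) * (2:ℝ)^(-α) + 2) * Real.Gamma ((n:ℝ)+1) * Real.Gamma (α+1)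
        / Real.Gamma ((n:ℝ)+α+1))
      ~[atTop] fun n : ℕ => (2:ℝ)^(-α) * Real.Gamma (α+1) * (n:ℝ)^(1-α) := by
  have hc : (0 : ℝ) < 2 ^ (-α) := by positivity
  have hlin : Tendsto (fun n : ℕ => (2:ℝ) ^ (-α) * n) atTop atTop :=
    tendsto_natCast_atTop_atTop.const_mul_atTop hc
  have hconst : (fun _ : ℕ => (2:ℝ) - 2 * 2 ^ (-α)) =o[atTop] fun n => (2:ℝ) ^ (-α) * n :=
    isLittleO_const_left.2 (Or.inr (tendsto_norm_atTop_atTop.comp hlin))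
  have haff : (fun n : ℕ => ((n:ℝ) - 2) * (2:ℝ)^(-α) + 2) ~[atTop] fun n => (2:ℝ) ^ (-α) * n :=
    (IsEquivalent.refl.add_isLittleO hconst).congr_left
      (Eventually.of_forall fun n => by simp only [Pi.add_apply]; ring)
  have hprod := (haff.mul (isEquivalent_Gamma_div_Gamma hα)).mul
    (IsEquivalent.refl (u := fun _ : ℕ => Real.Gamma (α + 1)))
  refine (hprod.congr_left (Eventually.of_forall fun n => ?_)).congr_right ?_
  · simp only [Pi.mul_apply]
    ring
  · filter_upwards [eventually_gt_atTop 0] with n hn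
    have hn' : (0 : ℝ) < n := by exact_mod_cast hn
    simp only [Pi.mul_apply]
    rw [sub_eq_add_neg, Real.rpow_add hn', Real.rpow_one]
    ring

/-- For `n ≥ 2` and `α > 0`, the expected total `α`-power-weighted length of the
nearest-neighbour directed graph on `n` i.i.d. uniform points on `(0,1)` equals
`((n-2)·2^(-α) + 2)·Γ(n+1)Γ(α+1)/Γ(n+α+1)`, which is asymptotic to
`2^(-α)Γ(α+1)·n^(1-α)` as `n → ∞`. -/
theorem nn_expected_weight (α : ℝ) (hα : 0 < α) :
    (∀ n : ℕ, 2 ≤ n →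
      ∫ u, nnWeight α u ∂(unif n)
        = (((n:ℝ) - 2) * (2:ℝ)^(-α) + 2) * Real.Gamma ((n:ℝ)+1) * Real.Gamma (α+1)
            / Real.Gamma ((n:ℝ)+α+1))
    ∧ (fun n : ℕ => ∫ u, nnWeight α u ∂(unif n))
        ~[Filter.atTop] fun n : ℕ => (2:ℝ)^(-α) * Real.Gamma (α+1) * (n:ℝ)^(1-α) :=
  ⟨fun _ hn => integral_nnWeight_unif hα hn,
    (isEquivalent_nnWeight_formula hα).congr_left <| by
      filter_upwards [eventually_ge_atTop 2] with n hn using (integral_nnWeight_unif hα hn).symm⟩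
end

section
/- Let U be uniform on (0,1) and, given U, let N(n) ~ Binomial(n-1, U). Then as n → ∞, U(log⁺N(n) − log n) converges in L² to U log U, where log⁺x = max{log x, 0}. -/
/-!
Given `U = u`, `N(n)` is binomial with `n - 1` trials, so `E[(N(n) - n u)²] ≤ n u`. For `k < n`,
`(log k - log (n u))² ≤ (4 + 8 log² n + 8 log² u) ((k - n u) / (n u))²`: near `n u` because
`|log a| ≤ 2 |a - 1|` for `a ≥ 1/2`, and away from `n u` because `log k - log (n u)` lies between
`-log n` and `-log u`. Multiplying by `u²` and averaging, the mean square error is at most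
`(36 + 8 log² n) / n` uniformly in `u ∈ (0,1)`, since `u log² u ≤ 4`. Because `log 0 = 0` (a junk
value), `log⁺ k = log k` for every natural `k`.

`U` and `N(n)` are not assumed measurable: a.e.-measurability is recovered from the prescribed law,
because a set whose outer measure and that of its complement add up to at most `1` is
null-measurable.
-/

open MeasureTheory Real
open scoped ENNReal

section
open Finset

lemma mul_log_sq_le_four {u : ℝ} (h0 : 0 < u) (h1 : u ≤ 1) : u * log u ^ 2 ≤ 4 := by
  have hs : |log √u * √u| < 1 := abs_log_mul_self_lt _ (sqrt_pos.2 h0) (sqrt_le_one.2 h1)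
  have hlog : log u = 2 * log √u := by
    rw [← log_rpow (sqrt_pos.2 h0)]; norm_num [sqrt_eq_rpow, ← rpow_natCast, ← rpow_mul h0.le]
  have : u * log u ^ 2 = 4 * (log √u * √u) ^ 2 := by
    rw [hlog]; nth_rw 1 [← sq_sqrt h0.le]; ring
  rw [this]
  nlinarith [sq_abs (log √u * √u), abs_nonneg (log √u * √u)]

lemma abs_log_le_two_mul_abs_sub_one {a : ℝ} (ha : 1 / 2 ≤ a) : |log a| ≤ 2 * |a - 1| := by
  have ha0 : 0 < a := by linarith
  have hup := log_le_sub_one_of_pos ha0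
  have hlow := one_sub_inv_le_log_of_pos ha0
  have hinv : 1 - a⁻¹ = (a - 1) / a := by field_simp
  rcases le_total 1 a with h | h
  · rw [abs_of_nonneg (log_nonneg h), abs_of_nonneg (by linarith)]; linarith
  · rw [abs_of_nonpos (log_nonpos ha0.le h), abs_of_nonpos (by linarith)]
    have : 2 * (a - 1) ≤ (a - 1) / a := by
      rw [le_div_iff₀ ha0]; nlinarith
    linarith

lemma sq_log_sub_log_le (x : ℝ) {t M : ℝ} (ht : 0 < t) (hM : |log x - log t| ≤ M) :
    (log x - log t) ^ 2 ≤ (4 + 4 * M ^ 2) * ((x - t) / t) ^ 2 := by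
  have hM0 : 0 ≤ M := (abs_nonneg _).trans hM
  by_cases hnear : |x - t| ≤ t / 2
  · have hx : t / 2 ≤ x := by linarith [(abs_le.1 hnear).1]
    have hquot : 1 / 2 ≤ x / t := by rw [le_div_iff₀ ht]; linarith
    have hdiv : log x - log t = log (x / t) := (log_div (by linarith) ht.ne').symm
    have hsub : x / t - 1 = (x - t) / t := by field_simp
    have := abs_log_le_two_mul_abs_sub_one hquot
    rw [hdiv, hsub] at *
    nlinarith [sq_abs (log (x / t)), sq_abs ((x - t) / t), abs_nonneg (log (x / t)),
      sq_nonneg M, sq_nonneg ((x - t) / t)]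
  · have hfar : 1 / 2 < |(x - t) / t| := by
      rw [abs_div, abs_of_pos ht, lt_div_iff₀ ht]; linarith
    have hq : 1 / 4 ≤ ((x - t) / t) ^ 2 := by nlinarith [sq_abs ((x - t) / t)]
    have hL : (log x - log t) ^ 2 ≤ M ^ 2 := by
      rw [← sq_abs]; exact pow_le_pow_left₀ (abs_nonneg _) hM 2
    nlinarith

lemma log_natCast_le_log_natCast {k n : ℕ} (h : k ≤ n) : log k ≤ log n := by
  simpa only [log_of_nat_eq_posLog] using posLog_le_posLog k.cast_nonneg (Nat.cast_le.2 h)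

lemma sq_mul_log_sub_le {n k : ℕ} (hk : k < n) {u : ℝ} (hu0 : 0 < u) (hu1 : u < 1) :
    (u * (log k - log n) - u * log u) ^ 2
      ≤ (4 + 8 * log n ^ 2 + 8 * log u ^ 2) * ((k - n * u) / n) ^ 2 := by
  have hn : (0 : ℝ) < n := by exact_mod_cast (Nat.zero_le k).trans_lt hk
  have hnu : 0 < n * u := mul_pos hn hu0
  have hlogu : log u < 0 := log_neg hu0 hu1
  have hM : |log k - log (n * u)| ≤ log n - log u := by
    rw [log_mul hn.ne' hu0.ne', abs_le]
    constructor <;> linarith [log_natCast_nonneg k, log_natCast_le_log_natCast hk.le]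
  have hmain := sq_log_sub_log_le k hnu hM
  have hM2 : (log n - log u) ^ 2 ≤ 2 * log n ^ 2 + 2 * log u ^ 2 := by
    nlinarith [sq_nonneg (log n + log u)]
  calc (u * (log k - log n) - u * log u) ^ 2 = u ^ 2 * (log k - log (n * u)) ^ 2 := by
        rw [log_mul hn.ne' hu0.ne']; ring
    _ ≤ u ^ 2 * ((4 + 4 * (log n - log u) ^ 2) * ((k - n * u) / (n * u)) ^ 2) := by gcongr
    _ = (4 + 4 * (log n - log u) ^ 2) * ((k - n * u) / n) ^ 2 := by field_simp
    _ ≤ (4 + 8 * log n ^ 2 + 8 * log u ^ 2) * ((k - n * u) / n) ^ 2 := by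
        gcongr ?_ * _; linarith

lemma sum_choose_mul_pow_mul_pow (m : ℕ) (u : ℝ) :
    ∑ k ∈ range (m + 1), (m.choose k : ℝ) * u ^ k * (1 - u) ^ (m - k) = 1 := by
  simpa [mul_assoc, mul_comm, mul_left_comm] using (add_pow u (1 - u) m).symm

lemma tsum_ofReal_choose_mul (m : ℕ) {u : ℝ} (hu0 : 0 ≤ u) (hu1 : u ≤ 1) {g : ℕ → ℝ}
    (hg : ∀ k, 0 ≤ g k) :
    ∑' k, ENNReal.ofReal ((m.choose k : ℝ) * u ^ k * (1 - u) ^ (m - k)) * ENNReal.ofReal (g k)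
      = ENNReal.ofReal (∑ k ∈ range (m + 1),
          (m.choose k : ℝ) * u ^ k * (1 - u) ^ (m - k) * g k) := by
  rw [tsum_eq_sum (s := range (m + 1)) fun k hk ↦ by
      simp [Nat.choose_eq_zero_of_lt (by simpa using hk : m < k)],
    ENNReal.ofReal_sum_of_nonneg fun k _ ↦ by have := hg k; positivity]
  refine sum_congr rfl fun k _ ↦ (ENNReal.ofReal_mul ?_).symm
  have : 0 ≤ 1 - u := by linarith
  positivity

lemma sum_choose_mul_sub_sq (m : ℕ) (u : ℝ) :
    ∑ k ∈ range (m + 1), (m.choose k : ℝ) * u ^ k * (1 - u) ^ (m - k) * (k - (m + 1) * u) ^ 2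
      = m * u * (1 - u) + u ^ 2 := by
  have eval_bernstein (k : ℕ) :
      (bernsteinPolynomial ℝ m k).eval u = m.choose k * u ^ k * (1 - u) ^ (m - k) := by
    simp [bernsteinPolynomial]
  have h1 := congrArg (Polynomial.eval u) (bernsteinPolynomial.sum_smul ℝ m)
  have h2 := congrArg (Polynomial.eval u) (bernsteinPolynomial.variance ℝ m)
  simp only [Polynomial.eval_finsetSum, Polynomial.eval_mul,
    Polynomial.eval_pow, Polynomial.eval_sub, Polynomial.eval_natCast, Polynomial.eval_X,
    Polynomial.eval_one, eval_bernstein, nsmul_eq_mul] at h1 h2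
  calc _ = ∑ k ∈ range (m + 1), (((m * u - k) ^ 2 * (m.choose k * u ^ k * (1 - u) ^ (m - k)))
        - 2 * u * (k * (m.choose k * u ^ k * (1 - u) ^ (m - k)))
        + (2 * m * u ^ 2 + u ^ 2) * (m.choose k * u ^ k * (1 - u) ^ (m - k))) :=
        sum_congr rfl fun k _ ↦ by ring
    _ = _ := by
      rw [sum_add_distrib, sum_sub_distrib, ← mul_sum, ← mul_sum, sum_choose_mul_pow_mul_pow,
        h1, h2]
      ring

lemma sum_choose_mul_sq_mul_log_sub_le (m : ℕ) {u : ℝ} (hu0 : 0 < u) (hu1 : u < 1) :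
    ∑ k ∈ range (m + 1), (m.choose k : ℝ) * u ^ k * (1 - u) ^ (m - k)
        * (u * (log k - log (m + 1)) - u * log u) ^ 2
      ≤ (36 + 8 * log (m + 1) ^ 2) / (m + 1) := by
  set A := 4 + 8 * log (m + 1) ^ 2 + 8 * log u ^ 2
  have hm : (0 : ℝ) < m + 1 := by positivity
  calc _ ≤ ∑ k ∈ range (m + 1), (m.choose k : ℝ) * u ^ k * (1 - u) ^ (m - k)
          * (A * ((k - (m + 1) * u) / (m + 1)) ^ 2) := by
        gcongr with k hk
        simpa using sq_mul_log_sub_le (mem_range.1 hk) hu0 hu1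
    _ = A / (m + 1) ^ 2 * (m * u * (1 - u) + u ^ 2) := by
        rw [← sum_choose_mul_sub_sq, mul_sum]
        refine sum_congr rfl fun k _ ↦ ?_
        field_simp
    _ ≤ A / (m + 1) ^ 2 * ((m + 1) * u) := by gcongr; nlinarith
    _ = A * u / (m + 1) := by field_simp
    _ ≤ (36 + 8 * log (m + 1) ^ 2) / (m + 1) := by
        gcongr
        nlinarith [mul_log_sq_le_four hu0 hu1.le, sq_nonneg (log (m + 1))]

end

lemma tendsto_log_sq_div_atTop (c d : ℝ) :
    Filter.Tendsto (fun m : ℕ ↦ (c + d * log (m + 1) ^ 2) / (m + 1)) Filter.atTop (nhds 0) := by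
  have hlog : Filter.Tendsto (fun x : ℝ ↦ (c + d * log x ^ 2) / x) Filter.atTop (nhds 0) := by
    have h1 := (tendsto_const_nhds (x := c)).div_atTop Filter.tendsto_id
    have h2 := (tendsto_pow_log_div_mul_add_atTop 1 0 2 one_ne_zero).const_mul d
    simpa [add_div, mul_div_assoc] using h1.add h2
  have hcast : Filter.Tendsto (fun m : ℕ ↦ (m + 1 : ℝ)) Filter.atTop Filter.atTop :=
    Filter.tendsto_atTop_add_const_right _ 1 tendsto_natCast_atTop_atTop
  exact hlog.comp hcast

section
open Set

variable {Ω : Type*} [MeasurableSpace Ω] {P : Measure Ω}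

lemma nullMeasurableSet_of_measure_add_measure_compl_le [IsFiniteMeasure P] {t : Set Ω}
    (h : P t + P tᶜ ≤ P univ) : NullMeasurableSet t P := by
  set H := toMeasurable P t
  set H' := toMeasurable P tᶜ
  have hcover : H ∪ H' = univ :=
    eq_univ_of_univ_subset fun x _ ↦ (em (x ∈ t)).imp (subset_toMeasurable P t ·)
      (subset_toMeasurable P tᶜ ·)
  have hoverlap : P (H ∩ H') = 0 := by
    have := measure_union_add_inter H (measurableSet_toMeasurable P tᶜ) (μ := P)
    rw [hcover, measure_toMeasurable, measure_toMeasurable] at this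
    exact nonpos_iff_eq_zero.1 <| ENNReal.le_of_add_le_add_left (measure_ne_top P univ)
      (by rw [this, add_zero]; exact h)
  have hHt : H =ᵐ[P] t := by
    refine ae_eq_set.2 ⟨measure_mono_null ?_ hoverlap, ?_⟩
    · exact fun x hx ↦ ⟨hx.1, subset_toMeasurable P tᶜ hx.2⟩
    · rw [sdiff_eq_empty.2 (subset_toMeasurable P t), measure_empty]
  exact (measurableSet_toMeasurable P t).nullMeasurableSet.congr hHt

lemma lintegral_comp_eq_tsum_lintegral_mul_density {α ι : Type*} [MeasurableSpace α] [Countable ι]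
    [MeasurableSpace ι] [MeasurableSingletonClass ι] {X : Ω → α} {K : Ω → ι}
    (hX : AEMeasurable X P) (hK : AEMeasurable K P) {ν : Measure α} {ρ : ι → α → ℝ≥0∞}
    (hρ : ∀ k, Measurable (ρ k))
    (hlaw : ∀ k s, MeasurableSet s → P (X ⁻¹' s ∩ K ⁻¹' {k}) = ∫⁻ a in s, ρ k a ∂ν)
    {F : α → ι → ℝ≥0∞} (hF : ∀ k, Measurable (F · k)) :
    ∫⁻ ω, F (X ω) (K ω) ∂P = ∑' k, ∫⁻ a, ρ k a * F a k ∂ν := by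
  have hfiber (k : ι) : NullMeasurableSet (K ⁻¹' {k}) P :=
    hK.nullMeasurable (measurableSet_singleton k)
  have hmap (k : ι) : (P.restrict (K ⁻¹' {k})).map X = ν.withDensity (ρ k) := by
    ext s hs
    rw [Measure.map_apply_of_aemeasurable hX.restrict hs, Measure.restrict_apply₀' (hfiber k),
      withDensity_apply _ hs, hlaw k s hs]
  calc ∫⁻ ω, F (X ω) (K ω) ∂P = ∑' k, ∫⁻ ω in K ⁻¹' {k}, F (X ω) (K ω) ∂P := by
        rw [← lintegral_iUnion₀ hfiber
          (fun i j hij ↦ ((Set.disjoint_singleton.2 hij).preimage K).aedisjoint),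
          ← preimage_iUnion, iUnion_of_singleton, Set.preimage_univ, Measure.restrict_univ]
    _ = ∑' k, ∫⁻ ω in K ⁻¹' {k}, F (X ω) k ∂P := by
        refine tsum_congr fun k ↦ lintegral_congr_ae ?_
        filter_upwards [ae_restrict_mem₀ (hfiber k)] with ω hω
        rw [show K ω = k from hω]
    _ = ∑' k, ∫⁻ a, ρ k a * F a k ∂ν := by
        refine tsum_congr fun k ↦ ?_
        rw [← lintegral_map' (hF k).aemeasurable hX.restrict, hmap,
          lintegral_withDensity_eq_lintegral_mul _ (hρ k) (hF k)]
        rfl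

variable [IsProbabilityMeasure P]

lemma aemeasurable_of_measure_preimage_le {α : Type*} [MeasurableSpace α]
    [MeasurableSpace.CountablyGenerated α] {X : Ω → α} (ν : Measure α) [IsProbabilityMeasure ν]
    (h : ∀ s, MeasurableSet s → P (X ⁻¹' s) ≤ ν s) : AEMeasurable X P := by
  refine NullMeasurable.aemeasurable fun s hs ↦ ?_
  apply nullMeasurableSet_of_measure_add_measure_compl_le
  calc P (X ⁻¹' s) + P (X ⁻¹' s)ᶜ ≤ ν s + ν sᶜ := add_le_add (h s hs) (h sᶜ hs.compl)
    _ = P univ := by rw [measure_add_measure_compl hs, measure_univ, measure_univ]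

lemma aemeasurable_of_tsum_measure_preimage_singleton_le {α : Type*} [Countable α]
    [MeasurableSpace α] [MeasurableSingletonClass α] {X : Ω → α}
    (h : ∑' a, P (X ⁻¹' {a}) ≤ 1) : AEMeasurable X P := by
  have hle (s : Set α) : P (X ⁻¹' s) ≤ ∑' a : s, P (X ⁻¹' {(a : α)}) := by
    rw [← biUnion_preimage_singleton]; exact measure_biUnion_le P s.to_countable _
  refine NullMeasurable.aemeasurable fun s _ ↦ ?_
  apply nullMeasurableSet_of_measure_add_measure_compl_le
  calc P (X ⁻¹' s) + P (X ⁻¹' s)ᶜ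
        ≤ ∑' a : s, P (X ⁻¹' {(a : α)}) + ∑' a : ↥sᶜ, P (X ⁻¹' {(a : α)}) :=
          add_le_add (hle s) (hle sᶜ)
    _ = ∑' a, P (X ⁻¹' {a}) :=
          ENNReal.summable.tsum_add_tsum_compl (f := fun a ↦ P (X ⁻¹' {a})) ENNReal.summable
    _ ≤ P univ := h.trans_eq measure_univ.symm

end

/-- `U` is uniform on `(0,1)` and, given `U = u`, `K` is binomial with parameters `m` and `u`. -/
def HasUniformBinomialLaw {Ω : Type*} [MeasurableSpace Ω] (P : Measure Ω) (U : Ω → ℝ)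
    (K : Ω → ℕ) (m : ℕ) : Prop :=
  ∀ s, MeasurableSet s → ∀ k : ℕ, P {ω | U ω ∈ s ∧ K ω = k}
    = ENNReal.ofReal (∫ u in s ∩ Set.Ioo 0 1, (m.choose k : ℝ) * u ^ k * (1 - u) ^ (m - k))

namespace HasUniformBinomialLaw

variable {Ω : Type*} [MeasurableSpace Ω] {P : Measure Ω} {U : Ω → ℝ} {K : Ω → ℕ} {m : ℕ}

lemma measure_inter_eq_setLIntegral (h : HasUniformBinomialLaw P U K m) {s : Set ℝ}
    (hs : MeasurableSet s) (k : ℕ) :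
    P (U ⁻¹' s ∩ K ⁻¹' {k}) = ∫⁻ u in s, ENNReal.ofReal ((m.choose k : ℝ) * u ^ k
      * (1 - u) ^ (m - k)) ∂volume.restrict (Set.Ioo 0 1) := by
  have hcont : Continuous fun u : ℝ ↦ (m.choose k : ℝ) * u ^ k * (1 - u) ^ (m - k) := by
    fun_prop
  rw [Measure.restrict_restrict hs, ← ofReal_integral_eq_lintegral_ofReal]
  · exact h s hs k
  · exact (hcont.integrableOn_Icc.mono_set Set.Ioo_subset_Icc_self).mono_set
      Set.inter_subset_right
  · filter_upwards [ae_restrict_mem (hs.inter measurableSet_Ioo)] with u hu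
    have : 0 ≤ 1 - u := by linarith [hu.2.2]
    have := hu.2.1.le
    positivity

lemma tsum_measure_inter (h : HasUniformBinomialLaw P U K m) {s : Set ℝ} (hs : MeasurableSet s) :
    ∑' k, P (U ⁻¹' s ∩ K ⁻¹' {k}) = volume.restrict (Set.Ioo 0 1) s := by
  simp_rw [h.measure_inter_eq_setLIntegral hs]
  rw [← lintegral_tsum fun k ↦ by fun_prop, ← setLIntegral_one]
  refine lintegral_congr_ae ?_
  filter_upwards [ae_restrict_of_ae (ae_restrict_mem measurableSet_Ioo)] with u hu
  simpa [sum_choose_mul_pow_mul_pow] using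
    tsum_ofReal_choose_mul m hu.1.le hu.2.le (g := fun _ ↦ 1) fun _ ↦ zero_le_one

lemma aemeasurable_fst [IsProbabilityMeasure P] (h : HasUniformBinomialLaw P U K m) :
    AEMeasurable U P := by
  have : IsProbabilityMeasure (volume.restrict (Set.Ioo (0 : ℝ) 1)) := ⟨by simp⟩
  refine aemeasurable_of_measure_preimage_le (volume.restrict (Set.Ioo 0 1)) fun s hs ↦ ?_
  calc P (U ⁻¹' s) = P (⋃ k, U ⁻¹' s ∩ K ⁻¹' {k}) := by
        rw [← Set.inter_iUnion, ← Set.preimage_iUnion, Set.iUnion_of_singleton,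
          Set.preimage_univ, Set.inter_univ]
    _ ≤ ∑' k, P (U ⁻¹' s ∩ K ⁻¹' {k}) := measure_iUnion_le _
    _ = volume.restrict (Set.Ioo 0 1) s := h.tsum_measure_inter hs

lemma aemeasurable_snd [IsProbabilityMeasure P] (h : HasUniformBinomialLaw P U K m) :
    AEMeasurable K P :=
  aemeasurable_of_tsum_measure_preimage_singleton_le <| by
    simpa using (h.tsum_measure_inter MeasurableSet.univ).le

lemma integral_sq_mul_log_sub_le [IsProbabilityMeasure P] (h : HasUniformBinomialLaw P U K m) :
    ∫ ω, (U ω * (log (K ω) - log (m + 1)) - U ω * log (U ω)) ^ 2 ∂P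
      ≤ (36 + 8 * log (m + 1) ^ 2) / (m + 1) := by
  set F : ℝ → ℕ → ℝ := fun u k ↦ (u * (log k - log (m + 1)) - u * log u) ^ 2
  have hF : Measurable (Function.uncurry F) :=
    measurable_from_prod_countable_left fun k ↦ by fun_prop
  have hlint : ∫⁻ ω, ENNReal.ofReal (F (U ω) (K ω)) ∂P
      ≤ ENNReal.ofReal ((36 + 8 * log (m + 1) ^ 2) / (m + 1)) := by
    rw [lintegral_comp_eq_tsum_lintegral_mul_density h.aemeasurable_fst h.aemeasurable_snd
      (fun k ↦ by fun_prop) (fun k s hs ↦ h.measure_inter_eq_setLIntegral hs k)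
      (F := fun u k ↦ ENNReal.ofReal (F u k)) (fun k ↦ by fun_prop),
      ← lintegral_tsum fun k ↦ by fun_prop]
    calc _ ≤ ∫⁻ _ : ℝ, ENNReal.ofReal ((36 + 8 * log (m + 1) ^ 2) / (m + 1))
          ∂volume.restrict (Set.Ioo 0 1) := by
          refine lintegral_mono_ae ?_
          filter_upwards [ae_restrict_mem measurableSet_Ioo] with u hu
          rw [tsum_ofReal_choose_mul m hu.1.le hu.2.le fun k ↦ sq_nonneg _]
          exact ENNReal.ofReal_le_ofReal (sum_choose_mul_sq_mul_log_sub_le m hu.1 hu.2)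
      _ = _ := by simp [Real.volume_Ioo]
  rw [integral_eq_lintegral_of_nonneg_ae (ae_of_all _ fun ω ↦ sq_nonneg _)
    (hF.comp_aemeasurable (h.aemeasurable_fst.prodMk h.aemeasurable_snd)).aestronglyMeasurable]
  exact ENNReal.toReal_le_of_le_ofReal (by positivity) hlint

end HasUniformBinomialLaw

/-- Let `U` be uniform on `(0,1)` and, conditionally on `U`, let `N(n)` be binomial with
parameters `n-1` and `U` (expressed through the joint law of `(U, N(n))`). Then
`U(log⁺ N(n) - log n)` converges in `L²` to `U log U` as `n → ∞`, where
`log⁺ x = max{log x, 0}`. -/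
theorem ulog_binomial_L2_convergence {Ω : Type*} [MeasurableSpace Ω] (P : Measure Ω)
    [IsProbabilityMeasure P] (U : Ω → ℝ) (N : ℕ → Ω → ℕ)
    (h : ∀ n : ℕ, 1 ≤ n → ∀ s : Set ℝ, MeasurableSet s → ∀ k : ℕ,
      P {ω | U ω ∈ s ∧ N n ω = k}
        = ENNReal.ofReal (∫ u in s ∩ Set.Ioo (0:ℝ) 1,
            ((n-1).choose k : ℝ) * u^k * (1-u)^(n-1-k))) :
    Filter.Tendsto
      (fun n : ℕ => ∫ ω,
        (U ω * (max (Real.log (N n ω)) 0 - Real.log n) - U ω * Real.log (U ω))^2 ∂P)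
      Filter.atTop (nhds 0) := by
  have hlaw (m : ℕ) : HasUniformBinomialLaw P U (N (m + 1)) m := fun s hs k ↦ by
    simpa only [Nat.add_sub_cancel] using h (m + 1) m.succ_pos s hs k
  have hbound (m : ℕ) : ∫ ω, (U ω * (max (Real.log (N (m + 1) ω)) 0 - Real.log ↑(m + 1))
      - U ω * Real.log (U ω)) ^ 2 ∂P ≤ (36 + 8 * log (m + 1) ^ 2) / (m + 1) := by
    simpa [max_eq_left (log_natCast_nonneg _)] using (hlaw m).integral_sq_mul_log_sub_le
  rw [← Filter.tendsto_add_atTop_iff_nat 1]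
  exact squeeze_zero (fun m ↦ integral_nonneg fun ω ↦ sq_nonneg _) hbound
    (tendsto_log_sq_div_atTop 36 8)
end
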